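/- arXiv:1508.07315 — 10 statements merged into one kernel-verified Lean document; each statement's English description precedes it below -/
import Mathlib

section
/- Let v_1,...,v_m ∈ ℤ^n. Then the following are equivalent: (1) for all integers a_1 ≤ b_1, ..., a_m ≤ b_m, whenever a vector w ∈ Σ_{a_i=b_i} a_i v_i + Σ_{a_i≠b_i} ℤ v_i can be written as w = Σ x_i v_i with rational x_i satisfying a_i ≤ x_i ≤ b_i, there exist integers y_i with a_i ≤ y_i ≤ b_i and w = Σ y_i v_i; (2) for every nonempty subset I ⊆ {1,...,m}, if a vector w ∈ Σ_{i∈I} ℤ v_i can be written as w = Σ_{i∈I} x_i v_i with rationals 0 ≤ x_i ≤ 1, then there exist y_i ∈ {0,1} with w = Σ_{i∈I} y_i v_i. -/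
open Finset

/-- The vectors `v i` are almost Farkas-related. -/
def AFR {ι V : Type*} [Fintype ι] (v : ι → V → ℤ) : Prop :=
  ∀ a b : ι → ℤ, (∀ i, a i ≤ b i) →
  ∀ w : V → ℤ,
    (∃ c : ι → ℤ, (∀ i, a i = b i → c i = a i) ∧ ∀ j, w j = ∑ i, c i * v i j) →
    (∃ x : ι → ℚ, (∀ i, (a i : ℚ) ≤ x i ∧ x i ≤ (b i : ℚ)) ∧
      ∀ j, (w j : ℚ) = ∑ i, x i * (v i j : ℚ)) →
    ∃ y : ι → ℤ, (∀ i, a i ≤ y i ∧ y i ≤ b i) ∧ ∀ j, w j = ∑ i, y i * v i j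

/-- The vectors `v i` are weakly Farkas-related. -/
def WFR {ι V : Type*} [Fintype ι] (v : ι → V → ℤ) : Prop :=
  ∀ a b : ι → ℤ, (∀ i, a i < b i) →
  ∀ w : V → ℤ,
    (∃ c : ι → ℤ, ∀ j, w j = ∑ i, c i * v i j) →
    (∃ x : ι → ℚ, (∀ i, (a i : ℚ) ≤ x i ∧ x i ≤ (b i : ℚ)) ∧
      ∀ j, (w j : ℚ) = ∑ i, x i * (v i j : ℚ)) →
    ∃ y : ι → ℤ, (∀ i, a i ≤ y i ∧ y i ≤ b i) ∧ ∀ j, w j = ∑ i, y i * v i j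

/-- `∑ i, a i • v i = 0` is an elementary integral relation: it is a nontrivial relation
and every integral relation supported on `{i | a i ≠ 0}` is an integer multiple of `a`. -/
def IsElemRel {ι V : Type*} [Fintype ι] (v : ι → V → ℤ) (a : ι → ℤ) : Prop :=
  (∃ i, a i ≠ 0) ∧ (∀ j, ∑ i, a i * v i j = 0) ∧
  ∀ b : ι → ℤ, (∀ i, a i = 0 → b i = 0) → (∀ j, ∑ i, b i * v i j = 0) →
    ∃ l : ℤ, ∀ i, b i = l * a i

theorem stmt0 {m n : ℕ} (v : Fin m → Fin n → ℤ) :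
    AFR v ↔
      ∀ I : Finset (Fin m), I.Nonempty →
        ∀ w : Fin n → ℤ,
          (∃ c : Fin m → ℤ, ∀ j, w j = ∑ i ∈ I, c i * v i j) →
          (∃ x : Fin m → ℚ, (∀ i ∈ I, 0 ≤ x i ∧ x i ≤ 1) ∧
            ∀ j, (w j : ℚ) = ∑ i ∈ I, x i * (v i j : ℚ)) →
          ∃ y : Fin m → ℤ, (∀ i ∈ I, y i = 0 ∨ y i = 1) ∧
            ∀ j, w j = ∑ i ∈ I, y i * v i j := by
  constructor
  · -- AFR → subset condition
    intro h I hI w hc hx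
    obtain ⟨c, hc⟩ := hc
    obtain ⟨x, hx01, hxw⟩ := hx
    obtain ⟨y, hy, hyw⟩ := h (fun _ => 0) (fun i => if i ∈ I then 1 else 0)
      (by intro i; split <;> norm_num)
      w
      ⟨fun i => if i ∈ I then c i else 0, by
        intro i hi
        dsimp at hi ⊢
        split
        · rename_i hmem; simp [hmem] at hi
        · rfl, by
        intro j
        rw [hc j]
        simp [ite_mul, Finset.sum_ite_mem]⟩
      ⟨fun i => if i ∈ I then x i else 0, by
        intro i
        dsimp
        split
        · rename_i hmem
          exact ⟨(hx01 i hmem).1, by push_cast; simpa using (hx01 i hmem).2⟩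
        · norm_num, by
        intro j
        rw [hxw j]
        simp [ite_mul, Finset.sum_ite_mem]⟩
    refine ⟨y, ?_, ?_⟩
    · intro i hi
      have h1 := (hy i).1
      have h2 := (hy i).2
      simp only [hi, if_pos] at h2
      omega
    · intro j
      rw [hyw j]
      have : ∀ i, i ∉ I → y i * v i j = 0 := by
        intro i hi
        have h1 := (hy i).1
        have h2 := (hy i).2
        simp only [hi, if_neg, if_false] at h2
        have : y i = 0 := le_antisymm h2 h1
        simp [this]
      rw [← Finset.sum_subset (Finset.subset_univ I)]
      intro i _ hi
      exact this i hi
  · -- subset condition → AFR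
    intro h a b hab w hc hx
    obtain ⟨c, hceq, hcw⟩ := hc
    obtain ⟨x, hxb, hxw⟩ := hx
    set I : Finset (Fin m) := Finset.univ.filter (fun i => a i < b i) with hIdef
    by_cases hIe : I.Nonempty
    · set z : Fin m → ℤ := fun i => if a i < b i then min ⌊x i⌋ (b i - 1) else a i with hz
      have hmemI : ∀ i, i ∈ I ↔ a i < b i := by
        intro i; simp [hIdef]
      have hzx : ∀ i, (z i : ℚ) ≤ x i := by
        intro i
        by_cases hi : a i < b i
        · simp only [hz, hi, if_pos]
          calc ((min ⌊x i⌋ (b i - 1) : ℤ) : ℚ) ≤ ((⌊x i⌋ : ℤ) : ℚ) := by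
                exact_mod_cast min_le_left _ _
            _ ≤ x i := Int.floor_le _
        · simp only [hz, hi, if_neg, if_false]
          exact (hxb i).1
      have hxz1 : ∀ i, x i ≤ (z i : ℚ) + 1 := by
        intro i
        by_cases hi : a i < b i
        · simp only [hz, hi, if_pos]
          rcases min_cases (⌊x i⌋) (b i - 1) with ⟨he, _⟩ | ⟨he, _⟩ <;> rw [he]
          · exact le_of_lt (by exact_mod_cast Int.lt_floor_add_one (x i))
          · push_cast
            have := (hxb i).2
            push_cast at this ⊢
            linarith
        · have hai : a i = b i := le_antisymm (hab i) (not_lt.mp hi)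
          simp only [hz, hi, if_neg, if_false]
          calc x i ≤ (b i : ℚ) := (hxb i).2
            _ = (a i : ℚ) := by rw [hai]
            _ ≤ (a i : ℚ) + 1 := by linarith
      have haz : ∀ i, a i ≤ z i := by
        intro i
        by_cases hi : a i < b i
        · simp only [hz, hi, if_pos]
          refine le_min ?_ (by omega)
          exact Int.le_floor.mpr (hxb i).1
        · simp [hz, hi]
      have hzb1 : ∀ i ∈ I, z i ≤ b i - 1 := by
        intro i hi
        rw [hmemI] at hi
        simp only [hz, hi, if_pos]
        exact min_le_right _ _
      have hznotI : ∀ i, i ∉ I → z i = a i ∧ a i = b i := by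
        intro i hi
        rw [hmemI] at hi
        exact ⟨by simp [hz, hi], le_antisymm (hab i) (not_lt.mp hi)⟩
      have hxnotI : ∀ i, i ∉ I → x i = (a i : ℚ) := by
        intro i hi
        obtain ⟨_, hab'⟩ := hznotI i hi
        have h1 := (hxb i).1
        have h2 := (hxb i).2
        rw [← hab'] at h2
        linarith
      set w' : Fin n → ℤ := fun j => w j - ∑ i, z i * v i j with hw'
      obtain ⟨y', hy'01, hy'w⟩ := h I hIe w'
        ⟨fun i => c i - z i, by
          intro j
          have : ∑ i ∈ I, (c i - z i) * v i j = ∑ i, (c i - z i) * v i j := by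
            refine Finset.sum_subset (Finset.subset_univ I) ?_
            intro i _ hi
            obtain ⟨hz1, hab'⟩ := hznotI i hi
            have : c i = z i := by rw [hz1, hceq i hab']
            simp [this]
          rw [this]
          simp only [hw', sub_mul, Finset.sum_sub_distrib]
          rw [← hcw j]⟩
        ⟨fun i => x i - (z i : ℚ), by
          intro i hi
          dsimp only
          constructor
          · linarith [hzx i]
          · linarith [hxz1 i], by
          intro j
          have : ∑ i ∈ I, (x i - (z i : ℚ)) * (v i j : ℚ)
              = ∑ i, (x i - (z i : ℚ)) * (v i j : ℚ) := by
            refine Finset.sum_subset (Finset.subset_univ I) ?_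
            intro i _ hi
            obtain ⟨hz1, _⟩ := hznotI i hi
            have : x i - (z i : ℚ) = 0 := by
              rw [hxnotI i hi, hz1]; ring
            simp [this]
          rw [this]
          simp only [sub_mul, Finset.sum_sub_distrib]
          rw [← hxw j]
          simp only [hw']
          push_cast
          ring⟩
      refine ⟨fun i => z i + (if i ∈ I then y' i else 0), ?_, ?_⟩
      · intro i
        by_cases hi : i ∈ I
        · simp only [hi, if_pos]
          rcases hy'01 i hi with h0 | h1
          · constructor
            · rw [h0]; simpa using haz i
            · rw [h0]
              have := hzb1 i hi
              omega
          · constructor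
            · rw [h1]
              have := haz i
              omega
            · rw [h1]
              have := hzb1 i hi
              omega
        · obtain ⟨hz1, hab'⟩ := hznotI i hi
          simp only [hi, if_neg, if_false, add_zero]
          rw [hz1]
          exact ⟨le_refl _, le_of_eq hab'⟩
      · intro j
        have hsum : ∑ i, (z i + (if i ∈ I then y' i else 0)) * v i j
            = ∑ i, z i * v i j + ∑ i ∈ I, y' i * v i j := by
          simp only [add_mul, Finset.sum_add_distrib]
          congr 1
          simp [ite_mul, Finset.sum_ite_mem]
        rw [hsum, ← hy'w j]
        simp [hw']
    · -- I empty: a = b everywhere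
      have hab' : ∀ i, a i = b i := by
        intro i
        have hni : i ∉ I := fun hi => hIe ⟨i, hi⟩
        simp only [hIdef, Finset.mem_filter, Finset.mem_univ, true_and, not_lt] at hni
        have := hab i
        omega
      refine ⟨c, ?_, hcw⟩
      intro i
      rw [hceq i (hab' i)]
      exact ⟨le_refl _, (hab' i).le⟩
end

section
/- Let v_1,...,v_m ∈ ℤ^n. The vectors are almost Farkas-related if and only if for every nonempty subset I ⊆ {1,...,m} and every natural number k ≥ 1, whenever a vector w ∈ Σ_{i∈I} ℤ v_i satisfies k·w = Σ_{i∈I} a_i v_i for integers 0 ≤ a_i ≤ k, there exist y_i ∈ {0,1} (i ∈ I) with w = Σ_{i∈I} y_i v_i. -/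
open Finset

theorem stmt1 {m n : ℕ} (v : Fin m → Fin n → ℤ) :
    AFR v ↔
      ∀ I : Finset (Fin m), I.Nonempty →
        ∀ k : ℕ, 1 ≤ k →
          ∀ w : Fin n → ℤ,
            (∃ c : Fin m → ℤ, ∀ j, w j = ∑ i ∈ I, c i * v i j) →
            (∃ a : Fin m → ℤ, (∀ i ∈ I, 0 ≤ a i ∧ a i ≤ (k : ℤ)) ∧
              ∀ j, (k : ℤ) * w j = ∑ i ∈ I, a i * v i j) →
            ∃ y : Fin m → ℤ, (∀ i ∈ I, y i = 0 ∨ y i = 1) ∧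
              ∀ j, w j = ∑ i ∈ I, y i * v i j := by
  constructor
  · -- forward
    intro hAFR I hI k hk w hc hα
    obtain ⟨c, hc⟩ := hc
    obtain ⟨α, hα1, hα2⟩ := hα
    have hkpos : (0:ℚ) < (k:ℚ) := by exact_mod_cast hk
    obtain ⟨y, hy1, hy2⟩ := hAFR (fun _ => 0) (fun i => if i ∈ I then 1 else 0)
      (by intro i; split <;> omega) w
      ⟨fun i => if i ∈ I then c i else 0, by
        intro i h; dsimp at h ⊢; split at h
        · omega
        · simp_all, by
        intro j
        rw [hc j, eq_comm]
        simp [ite_mul, Finset.sum_ite_mem]⟩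
      ⟨fun i => if i ∈ I then (α i : ℚ) / k else 0, by
        intro i; dsimp; split
        · have h0 : (0:ℚ) ≤ (α i : ℚ) := by exact_mod_cast (hα1 i (by assumption)).1
          have h1 : (α i : ℚ) ≤ (k:ℚ) := by exact_mod_cast (hα1 i (by assumption)).2
          constructor
          · positivity
          · push_cast
            rw [div_le_one hkpos]; exact h1
        · norm_num, by
        intro j
        have h2 : ((k:ℚ)) * (w j : ℚ) = ∑ i ∈ I, (α i : ℚ) * (v i j : ℚ) := by
          exact_mod_cast congrArg (fun z : ℤ => (z : ℚ)) (hα2 j)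
        calc (w j : ℚ) = (1/(k:ℚ)) * ((k:ℚ) * w j) := by field_simp
          _ = (1/(k:ℚ)) * ∑ i ∈ I, (α i : ℚ) * (v i j : ℚ) := by rw [h2]
          _ = ∑ i ∈ I, ((α i : ℚ)/k) * (v i j : ℚ) := by
              rw [Finset.mul_sum]; exact Finset.sum_congr rfl (by intros; ring)
          _ = ∑ i, (if i ∈ I then (α i : ℚ)/k else 0) * (v i j : ℚ) := by
              rw [eq_comm]; simp [ite_mul, Finset.sum_ite_mem]⟩
    refine ⟨y, ?_, ?_⟩
    · intro i hi
      have := hy1 i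
      simp only [hi, if_pos] at this
      omega
    · intro j
      rw [hy2 j, ← Finset.sum_filter_add_sum_filter_not Finset.univ (· ∈ I)]
      have h0 : ∑ i ∈ Finset.univ.filter (¬ · ∈ I), y i * v i j = 0 := by
        apply Finset.sum_eq_zero
        intro i hi
        simp only [Finset.mem_filter] at hi
        have := hy1 i
        simp only [hi.2, if_neg, if_false] at this
        have : y i = 0 := by omega
        simp [this]
      rw [h0, add_zero]
      apply Finset.sum_congr
      · ext i; simp
      · intros; rfl
  · -- backward
    intro H a b hab w hc hx
    obtain ⟨c, hc1, hc2⟩ := hc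
    obtain ⟨x, hx1, hx2⟩ := hx
    by_cases hempty : ∀ i, a i = b i
    · refine ⟨a, fun i => ⟨le_refl _, hab i⟩, ?_⟩
      intro j
      rw [hc2 j]
      exact Finset.sum_congr rfl (fun i _ => by rw [hc1 i (hempty i)])
    · push_neg at hempty
      set I : Finset (Fin m) := Finset.univ.filter (fun i => a i ≠ b i) with hIdef
      have hmemI : ∀ i, i ∈ I ↔ a i ≠ b i := by intro i; simp [hIdef]
      have hInem : I.Nonempty := by
        obtain ⟨i, hi⟩ := hempty; exact ⟨i, (hmemI i).mpr hi⟩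
      -- on I^c, x i = a i and c i = a i
      have hxc : ∀ i, i ∉ I → x i = (a i : ℚ) := by
        intro i hi
        have hi' : a i = b i := by by_contra h; exact hi ((hmemI i).mpr h)
        have := hx1 i
        have : x i ≤ (a i : ℚ) := by rw [hi']; exact_mod_cast this.2
        linarith [(hx1 i).1]
      have hcc : ∀ i, i ∉ I → c i = a i := by
        intro i hi
        exact hc1 i (by by_contra h; exact hi ((hmemI i).mpr h))
      -- z
      set z : Fin m → ℤ := fun i => min ⌊x i⌋ (b i - 1) with hzdef
      have hza : ∀ i, i ∈ I → a i ≤ z i := by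
        intro i hi
        have h1 : a i ≤ ⌊x i⌋ := Int.le_floor.mpr (hx1 i).1
        have h2 : a i ≠ b i := (hmemI i).mp hi
        have h3 : a i ≤ b i - 1 := by have := hab i; omega
        exact le_min h1 h3
      have hzx : ∀ i, (z i : ℚ) ≤ x i := fun i =>
        le_trans (by exact_mod_cast min_le_left _ _ |>.trans (le_refl _) |> fun h => h) (Int.floor_le (x i))
      have hxz1 : ∀ i, x i ≤ (z i : ℚ) + 1 := by
        intro i
        have h1 : x i < (⌊x i⌋ : ℚ) + 1 := Int.lt_floor_add_one (x i)
        have h2 : x i ≤ (b i : ℚ) := (hx1 i).2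
        rcases min_cases ⌊x i⌋ (b i - 1) with ⟨h, _⟩ | ⟨h, _⟩ <;> rw [hzdef] <;> dsimp <;> rw [h]
        · linarith
        · push_cast; linarith
      -- common denominator
      set k : ℕ := ∏ i, (x i).den with hkdef
      have hkpos : 1 ≤ k := by
        rw [hkdef]
        exact Finset.one_le_prod' (fun i _ => (x i).pos)
      have hkQ : (0:ℚ) < (k:ℚ) := by exact_mod_cast hkpos
      have hint : ∀ i : Fin m, ∃ A : ℤ, (x i) * (k : ℚ) = (A : ℚ) := by
        intro i
        obtain ⟨d, hd⟩ := Finset.dvd_prod_of_mem (fun i => (x i).den) (Finset.mem_univ i)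
        refine ⟨(x i).num * d, ?_⟩
        have h1 : (x i) * ((x i).den : ℚ) = ((x i).num : ℚ) := by
          exact_mod_cast Rat.mul_den_eq_num (x i)
        rw [hkdef]; rw [show (∏ i, (x i).den) = (x i).den * d from hd]
        push_cast
        rw [← mul_assoc, h1]
      choose A hA using hint
      -- w'
      set w' : Fin n → ℤ := fun j => w j - ∑ i ∈ Finset.univ.filter (¬ · ∈ I), a i * v i j
          - ∑ i ∈ I, z i * v i j with hw'def
      have hsplit : ∀ (f : Fin m → ℤ) j, ∑ i, f i * v i j
          = ∑ i ∈ I, f i * v i j + ∑ i ∈ Finset.univ.filter (¬ · ∈ I), f i * v i j := by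
        intro f j
        rw [← Finset.sum_filter_add_sum_filter_not Finset.univ (· ∈ I)]
        congr 1
        apply Finset.sum_congr
        · ext i; simp
        · intros; rfl
      have hw'int : ∀ j, w' j = ∑ i ∈ I, (c i - z i) * v i j := by
        intro j
        have e1 : ∑ i ∈ I, (c i - z i) * v i j
            = ∑ i ∈ I, c i * v i j - ∑ i ∈ I, z i * v i j := by
          rw [← Finset.sum_sub_distrib]
          exact Finset.sum_congr rfl (fun i _ => by ring)
        have e2 : ∑ i ∈ Finset.univ.filter (¬ · ∈ I), c i * v i j
            = ∑ i ∈ Finset.univ.filter (¬ · ∈ I), a i * v i j := by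
          apply Finset.sum_congr rfl
          intro i hi
          simp only [Finset.mem_filter] at hi
          rw [hcc i hi.2]
        rw [hw'def]; dsimp only
        rw [hc2 j, hsplit c j, e2, e1]
        ring
      -- the α for the condition
      set α : Fin m → ℤ := fun i => A i - (k : ℤ) * z i with hαdef
      have hαQ : ∀ i, (α i : ℚ) = (k : ℚ) * (x i - z i) := by
        intro i
        rw [hαdef]; push_cast
        rw [← hA i]; ring
      have hαbd : ∀ i ∈ I, 0 ≤ α i ∧ α i ≤ (k : ℤ) := by
        intro i hi
        constructor
        · have : (0:ℚ) ≤ (α i : ℚ) := by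
            rw [hαQ i]
            have := hzx i
            nlinarith
          exact_mod_cast this
        · have : (α i : ℚ) ≤ (k : ℚ) := by
            rw [hαQ i]
            have := hxz1 i
            nlinarith
          exact_mod_cast this
      have hw'rat : ∀ j, (k:ℤ) * w' j = ∑ i ∈ I, α i * v i j := by
        intro j
        have hx2' : (w j : ℚ) = ∑ i ∈ I, x i * (v i j:ℚ)
            + ∑ i ∈ Finset.univ.filter (¬ · ∈ I), (a i : ℚ) * (v i j:ℚ) := by
          rw [hx2 j, ← Finset.sum_filter_add_sum_filter_not Finset.univ (· ∈ I)]
          congr 1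
          · apply Finset.sum_congr
            · ext i; simp [hIdef]
            · intros; rfl
          · apply Finset.sum_congr rfl
            intro i hi
            simp only [Finset.mem_filter] at hi
            rw [hxc i hi.2]
        have eα : (∑ i ∈ I, (α i:ℚ) * (v i j:ℚ))
            = (k:ℚ) * ((∑ i ∈ I, x i * (v i j:ℚ)) - ∑ i ∈ I, (z i:ℚ) * (v i j:ℚ)) := by
          rw [mul_sub, Finset.mul_sum, Finset.mul_sum, ← Finset.sum_sub_distrib]
          exact Finset.sum_congr rfl (fun i _ => by rw [hαQ i]; ring)
        have hQ : (k:ℚ) * ((w j:ℚ) - (∑ i ∈ Finset.univ.filter (¬ · ∈ I), (a i:ℚ) * (v i j:ℚ))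
            - ∑ i ∈ I, (z i:ℚ) * (v i j:ℚ)) = ∑ i ∈ I, (α i:ℚ) * (v i j:ℚ) := by
          rw [hx2', eα]; ring
        show (k:ℤ) * (w j - ∑ i ∈ Finset.univ.filter (¬ · ∈ I), a i * v i j
            - ∑ i ∈ I, z i * v i j) = ∑ i ∈ I, α i * v i j
        exact_mod_cast hQ
      obtain ⟨y', hy'1, hy'2⟩ := H I hInem k hkpos w'
        ⟨fun i => c i - z i, hw'int⟩ ⟨α, hαbd, hw'rat⟩
      refine ⟨fun i => if i ∈ I then z i + y' i else a i, ?_, ?_⟩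
      · intro i
        by_cases hi : i ∈ I
        · simp only [hi, if_pos]
          rcases hy'1 i hi with h | h <;>
            [skip; skip] <;> rw [h] <;>
            constructor
          · linarith [hza i hi]
          · have := hza i hi
            have hzb : z i ≤ b i - 1 := min_le_right _ _
            omega
          · linarith [hza i hi]
          · have hzb : z i ≤ b i - 1 := min_le_right _ _
            omega
        · simp only [hi, if_neg, if_false]
          exact ⟨le_refl _, hab i⟩
      · intro j
        rw [hsplit _ j]
        have h1 : ∑ i ∈ I, (if i ∈ I then z i + y' i else a i) * v i j
            = ∑ i ∈ I, z i * v i j + ∑ i ∈ I, y' i * v i j := by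
          rw [← Finset.sum_add_distrib]
          apply Finset.sum_congr rfl
          intro i hi
          simp only [hi, if_pos]
          ring
        have h2 : ∑ i ∈ Finset.univ.filter (¬ · ∈ I), (if i ∈ I then z i + y' i else a i) * v i j
            = ∑ i ∈ Finset.univ.filter (¬ · ∈ I), a i * v i j := by
          apply Finset.sum_congr rfl
          intro i hi
          simp only [Finset.mem_filter] at hi
          simp [hi.2]
        rw [h1, h2, ← hy'2 j, hw'def]
        ring
end

section
/- Vectors v_1,...,v_m ∈ ℤ^n are almost Farkas-related if and only if for every elementary integral relation Σ_{i=1}^m a_i v_i = 0 one has |a_i| ≤ 2 for all i, and there is at most one index i with |a_i| = 2. -/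
open Finset

section KLGdefs

variable {ι : Type} [Fintype ι]

/-- Elementary vector of a subgroup of `ι → ℤ`. -/
def ElemP (P : AddSubgroup (ι → ℤ)) (a : ι → ℤ) : Prop :=
  a ∈ P ∧ (∃ i, a i ≠ 0) ∧ ∀ b ∈ P, (∀ i, a i = 0 → b i = 0) → ∃ l : ℤ, b = l • a

/-- All elementary vectors have entries of absolute value at most 2, with at most one entry
of absolute value 2. -/
def Hcond (P : AddSubgroup (ι → ℤ)) : Prop :=
  ∀ a, ElemP P a → (∀ i, |a i| ≤ 2) ∧ ∀ i i', |a i| = 2 → |a i'| = 2 → i = i'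

/-- `x` is in the rational span of `P`. -/
def QPmem (P : AddSubgroup (ι → ℤ)) (x : ι → ℚ) : Prop :=
  ∃ N : ℤ, 0 < N ∧ ∃ z ∈ P, ∀ i, (z i : ℚ) = N * x i

lemma QPmem_of_mem {P : AddSubgroup (ι → ℤ)} {z : ι → ℤ} (hz : z ∈ P) :
    QPmem P (fun i => (z i : ℚ)) :=
  ⟨1, one_pos, z, hz, fun i => by push_cast; ring⟩

lemma QPmem.add_mul_cast {P : AddSubgroup (ι → ℤ)} {x : ι → ℚ}
    (hx : QPmem P x) {e : ι → ℤ} (he : e ∈ P) (q : ℚ) :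
    QPmem P (fun i => x i + q * (e i : ℚ)) := by
  obtain ⟨N, hN, z, hzP, hz⟩ := hx
  refine ⟨N * q.den, by positivity, (q.den : ℤ) • z + (N * q.num) • e, ?_, fun i => ?_⟩
  · exact P.add_mem (P.zsmul_mem hzP _) (P.zsmul_mem he _)
  · have hden : (q.den : ℚ) * q = q.num := by
      rw [mul_comm]; exact Rat.mul_den_eq_num q
    simp only [Pi.add_apply, Pi.smul_apply, smul_eq_mul]
    push_cast
    rw [hz i]
    linear_combination (-((N : ℚ) * (e i : ℚ))) * hden

end KLGdefs

section ElemExists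

variable {ι : Type} [Fintype ι]

lemma exists_elem (P : AddSubgroup (ι → ℤ)) (p : ι)
    (h : ∃ z ∈ P, z p ≠ 0) : ∃ a, ElemP P a ∧ a p ≠ 0 := by
  classical
  set card0 : (ι → ℤ) → ℕ := fun z => (univ.filter fun i => z i ≠ 0).card with hcard0
  have hQ : ∃ k, ∃ z, z ∈ P ∧ z p ≠ 0 ∧ card0 z = k := by
    obtain ⟨z, hz, hzp⟩ := h; exact ⟨card0 z, z, hz, hzp, rfl⟩
  obtain ⟨z₀, hz₀P, hz₀p, hz₀c⟩ := Nat.find_spec hQ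
  have hmin : ∀ w, w ∈ P → w p ≠ 0 → Nat.find hQ ≤ card0 w := by
    intro w hwP hwp
    by_contra hlt
    exact Nat.find_min hQ (lt_of_not_ge hlt) ⟨w, hwP, hwp, rfl⟩
  have helim : ∀ w, w ∈ P → (∀ i, z₀ i = 0 → w i = 0) → w p = 0 → w = 0 := by
    intro w hwP hsupp hwp
    by_contra hw
    obtain ⟨q, hq⟩ : ∃ q, w q ≠ 0 := by
      by_contra hq; push_neg at hq; exact hw (funext hq)
    have hzq : z₀ q ≠ 0 := fun h0 => hq (hsupp q h0)
    set u : ι → ℤ := (z₀ q) • w - (w q) • z₀ with hu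
    have huP : u ∈ P := P.sub_mem (P.zsmul_mem hwP _) (P.zsmul_mem hz₀P _)
    have hup : u p ≠ 0 := by
      have : u p = -(w q * z₀ p) := by
        simp only [hu, Pi.sub_apply, Pi.smul_apply, smul_eq_mul, hwp]
        ring
      rw [this]
      simp only [neg_ne_zero]
      exact mul_ne_zero hq hz₀p
    have hsub : (univ.filter fun i => u i ≠ 0) ⊆ (univ.filter fun i => z₀ i ≠ 0).erase q := by
      intro i hi
      simp only [mem_filter, mem_univ, true_and] at hi
      rw [Finset.mem_erase]
      constructor
      · rintro rfl
        apply hi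
        simp [hu]
        ring
      · simp only [mem_filter, mem_univ, true_and]
        intro h0
        exact hi (by simp [hu, h0, hsupp i h0])
    have hcle : card0 u < card0 z₀ := by
      have h1 : card0 u ≤ ((univ.filter fun i => z₀ i ≠ 0).erase q).card :=
        Finset.card_le_card hsub
      have h2 : ((univ.filter fun i => z₀ i ≠ 0).erase q).card
          < (univ.filter fun i => z₀ i ≠ 0).card :=
        Finset.card_erase_lt_of_mem (by simp [hzq])
      exact lt_of_le_of_lt h1 h2
    have := hmin u huP hup
    omega
  set K : AddSubgroup (ι → ℤ) :=
    { carrier := {z | ∀ i, z₀ i = 0 → z i = 0}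
      zero_mem' := by intro i _; rfl
      add_mem' := by intro a b ha hb i h0; simp only [Pi.add_apply, ha i h0, hb i h0, add_zero]
      neg_mem' := by intro a ha i h0; simp only [Pi.neg_apply, ha i h0, neg_zero] } with hK
  have hKmem : ∀ z : ι → ℤ, z ∈ K ↔ ∀ i, z₀ i = 0 → z i = 0 := fun z => Iff.rfl
  set J : AddSubgroup ℤ := (P ⊓ K).map (Pi.evalAddMonoidHom (fun _ => ℤ) p) with hJ
  obtain ⟨g, hgJ⟩ := Int.subgroup_cyclic J
  have hz₀K : z₀ ∈ K := fun i h0 => h0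
  have hz₀J : z₀ p ∈ J := ⟨z₀, ⟨hz₀P, hz₀K⟩, rfl⟩
  have hg0 : g ≠ 0 := by
    rintro rfl
    rw [hgJ, AddSubgroup.mem_closure_singleton] at hz₀J
    obtain ⟨n, hn⟩ := hz₀J
    simp at hn
    exact hz₀p hn.symm
  have hgmem : g ∈ J := by
    rw [hgJ]
    exact AddSubgroup.subset_closure rfl
  obtain ⟨a₀, ⟨ha₀P, ha₀K⟩, ha₀p⟩ := hgmem
  simp only [Pi.evalAddMonoidHom_apply] at ha₀p
  refine ⟨a₀, ⟨ha₀P, ⟨p, by rw [ha₀p]; exact hg0⟩, ?_⟩, by rw [ha₀p]; exact hg0⟩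
  intro b hbP hb
  have hbK : b ∈ K := fun i h0 => hb i (ha₀K i h0)
  have hbJ : b p ∈ J := ⟨b, ⟨hbP, hbK⟩, rfl⟩
  rw [hgJ, AddSubgroup.mem_closure_singleton] at hbJ
  obtain ⟨l, hl⟩ := hbJ
  refine ⟨l, ?_⟩
  have hwzero : b - l • a₀ = 0 := by
    apply helim _ (P.sub_mem hbP (P.zsmul_mem ha₀P _))
    · intro i h0
      simp only [Pi.sub_apply, Pi.smul_apply, smul_eq_mul]
      rw [hbK i h0, ha₀K i h0]
      ring
    · simp only [Pi.sub_apply, Pi.smul_apply, smul_eq_mul]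
      rw [ha₀p, ← hl]
      simp [mul_comm]
  have := sub_eq_zero.mp hwzero
  exact this

end ElemExists

section Restrict

variable {ι : Type} [Fintype ι] [DecidableEq ι]

/-- Extension by zero at coordinate `p`. -/
def ext0 (p : ι) : ({i : ι // i ≠ p} → ℤ) →+ (ι → ℤ) where
  toFun z := fun i => if h : i = p then 0 else z ⟨i, h⟩
  map_zero' := by funext i; by_cases h : i = p <;> simp [h]
  map_add' a b := by funext i; by_cases h : i = p <;> simp [h]

lemma ext0_apply_ne (p : ι) (z : {i : ι // i ≠ p} → ℤ) (i : ι) (h : i ≠ p) :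
    ext0 p z i = z ⟨i, h⟩ := by simp [ext0, h]

lemma ext0_apply_p (p : ι) (z : {i : ι // i ≠ p} → ℤ) :
    ext0 p z p = 0 := by simp [ext0]

lemma ext0_restrict (p : ι) (b : ι → ℤ) (hbp : b p = 0) :
    ext0 p (fun i' => b i'.1) = b := by
  funext i
  by_cases h : i = p
  · subst h; simp [ext0, hbp]
  · simp [ext0, h]

lemma Hcond_comap (P : AddSubgroup (ι → ℤ)) (p : ι) (hH : Hcond P) :
    Hcond (P.comap (ext0 p)) := by
  intro a' ⟨haP, ⟨i₀, hi₀⟩, hamin⟩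
  have helem : ElemP P (ext0 p a') := by
    refine ⟨haP, ⟨i₀.1, by rw [ext0_apply_ne p a' i₀.1 i₀.2]; simpa using hi₀⟩, ?_⟩
    intro b hbP hb
    have hbp : b p = 0 := hb p (ext0_apply_p p a')
    have hb'P : (fun i' : {i : ι // i ≠ p} => b i'.1) ∈ P.comap (ext0 p) := by
      rw [AddSubgroup.mem_comap, ext0_restrict p b hbp]
      exact hbP
    obtain ⟨l, hl⟩ := hamin _ hb'P (fun i' h0 => by
      have := hb i'.1
      rw [ext0_apply_ne p a' i'.1 i'.2] at this
      exact this h0)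
    refine ⟨l, ?_⟩
    rw [← ext0_restrict p b hbp, hl]
    exact AddMonoidHom.map_zsmul (ext0 p) _ _
  obtain ⟨h1, h2⟩ := hH _ helem
  constructor
  · intro i'
    have := h1 i'.1
    rwa [ext0_apply_ne p a' i'.1 i'.2] at this
  · intro i' j' hi' hj'
    have hi : |ext0 p a' i'.1| = 2 := by rwa [ext0_apply_ne p a' i'.1 i'.2]
    have hj : |ext0 p a' j'.1| = 2 := by rwa [ext0_apply_ne p a' j'.1 j'.2]
    exact Subtype.ext (h2 i'.1 j'.1 hi hj)

end Restrict

section KLGmain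

/-- Statement of the key lattice rounding lemma, for induction. -/
def KLGstmt (n : ℕ) : Prop :=
  ∀ (ι : Type) [Fintype ι], Fintype.card ι ≤ n →
    ∀ P : AddSubgroup (ι → ℤ), Hcond P →
    ∀ (β : ι → ℤ) (d : ι → ℚ),
      (∀ i, (β i : ℚ) ≤ d i ∧ d i ≤ (β i : ℚ) + 1) →
      QPmem P d →
      ∃ z ∈ P, ∀ i, β i ≤ z i ∧ z i ≤ β i + 1

lemma KLG_key (n : ℕ) (hIH : KLGstmt n) {ι : Type} [Fintype ι] [DecidableEq ι]
    (hcard : Fintype.card ι ≤ n + 1) (P : AddSubgroup (ι → ℤ)) (hH : Hcond P)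
    (β : ι → ℤ) (p : ι) (γ : ℤ) (y : ι → ℤ) (hyP : y ∈ P) (hyp : y p = γ)
    (x : ι → ℚ) (hxQ : QPmem P x) (hxwin : ∀ i, (β i : ℚ) ≤ x i ∧ x i ≤ (β i : ℚ) + 1)
    (hxp : x p = (γ : ℚ)) :
    ∃ z ∈ P, ∀ i, β i ≤ z i ∧ z i ≤ β i + 1 := by
  classical
  have hcard' : Fintype.card {i : ι // i ≠ p} ≤ n := by
    have h1 : Fintype.card {i : ι // i ≠ p} = Fintype.card ι - 1 := by
      have := Fintype.card_subtype_compl (fun i : ι => i = p)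
      simpa [Fintype.card_subtype_eq] using this
    have h2 : 1 ≤ Fintype.card ι := Fintype.card_pos_iff.mpr ⟨p⟩
    omega
  have hH' : Hcond (P.comap (ext0 p)) := Hcond_comap P p hH
  have hdQ' : QPmem (P.comap (ext0 p)) (fun i' : {i : ι // i ≠ p} => x i'.1 - (y i'.1 : ℚ)) := by
    obtain ⟨N, hN, zx, hzxP, hzx⟩ := hxQ
    have hz2p : (zx - N • y) p = 0 := by
      have h1 : (zx p : ℚ) = ((N * γ : ℤ) : ℚ) := by
        rw [hzx p, hxp]; push_cast; ring
      have h2 : zx p = N * γ := by exact_mod_cast h1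
      simp [Pi.sub_apply, h2, hyp]
    refine ⟨N, hN, (fun i' => zx i'.1 - N * y i'.1), ?_, ?_⟩
    · rw [AddSubgroup.mem_comap]
      have heq : ext0 p (fun i' : {i : ι // i ≠ p} => zx i'.1 - N * y i'.1) = zx - N • y := by
        have := ext0_restrict p (zx - N • y) hz2p
        convert this using 2
        funext i'; simp
      rw [heq]
      exact P.sub_mem hzxP (P.zsmul_mem hyP _)
    · intro i'
      push_cast
      rw [hzx i'.1]
      ring
  have hwin' : ∀ i' : {i : ι // i ≠ p},
      ((β i'.1 - y i'.1 : ℤ) : ℚ) ≤ x i'.1 - (y i'.1 : ℚ) ∧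
      x i'.1 - (y i'.1 : ℚ) ≤ ((β i'.1 - y i'.1 : ℤ) : ℚ) + 1 := by
    intro i'
    obtain ⟨h1, h2⟩ := hxwin i'.1
    constructor <;> push_cast <;> linarith
  obtain ⟨z', hz'P, hz'win⟩ := hIH {i : ι // i ≠ p} hcard' (P.comap (ext0 p)) hH'
    (fun i' => β i'.1 - y i'.1) (fun i' => x i'.1 - (y i'.1 : ℚ)) hwin' hdQ'
  refine ⟨y + ext0 p z', P.add_mem hyP (AddSubgroup.mem_comap.mp hz'P), fun i => ?_⟩
  by_cases h : i = p
  · rw [h]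
    have h0 : (y + ext0 p z') p = γ := by
      simp [Pi.add_apply, ext0_apply_p, hyp]
    rw [h0]
    obtain ⟨h1, h2⟩ := hxwin p
    rw [hxp] at h1 h2
    exact ⟨by exact_mod_cast h1, by exact_mod_cast h2⟩
  · have h0 : (y + ext0 p z') i = y i + z' ⟨i, h⟩ := by
      simp [Pi.add_apply, ext0_apply_ne p z' i h]
    rw [h0]
    have h1 : β i - y i ≤ z' ⟨i, h⟩ := (hz'win ⟨i, h⟩).1
    have h2 : z' ⟨i, h⟩ ≤ β i - y i + 1 := (hz'win ⟨i, h⟩).2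
    omega

end KLGmain

theorem KLG_all : ∀ n : ℕ, KLGstmt n := by
  intro n
  induction n with
  | zero =>
    intro ι _ hcard P hH β d hwin hdQ
    have hE : IsEmpty ι := Fintype.card_eq_zero_iff.mp (Nat.le_zero.mp hcard)
    exact ⟨0, P.zero_mem, fun i => hE.elim i⟩
  | succ n IH =>
    intro ι instι hcard P hH β d hwin hdQ
    classical
    by_cases hempcase : IsEmpty ι
    · exact ⟨0, P.zero_mem, fun i => hempcase.elim i⟩
    rw [not_isEmpty_iff] at hempcase
    by_cases hsl : ∃ (p : ι) (γ : ℤ) (y : ι → ℤ), y ∈ P ∧ y p = γ ∧ (γ : ℚ) = d p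
    · obtain ⟨p, γ, y, hyP, hyp, hγ⟩ := hsl
      exact KLG_key n IH hcard P hH β p γ y hyP hyp d hdQ hwin hγ.symm
    push_neg at hsl
    have himg : ∀ p : ι, ∃ z ∈ P, z p ≠ 0 := by
      intro p
      by_contra hno
      push_neg at hno
      obtain ⟨N, hN, zd, hzdP, hzd⟩ := hdQ
      have h0 : d p = 0 := by
        have h1 := hzd p
        rw [hno zd hzdP] at h1
        push_cast at h1
        rcases mul_eq_zero.mp h1.symm with h' | h'
        · exact absurd h' (by exact_mod_cast ne_of_gt hN)
        · exact h'
      exact hsl p 0 0 P.zero_mem rfl (by rw [h0]; norm_num)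
    have hgex : ∀ p : ι, ∃ g : ℤ, g ≠ 0 ∧ (∀ z ∈ P, g ∣ z p) ∧ ∃ y ∈ P, y p = g := by
      intro p
      obtain ⟨g0, hg0J⟩ := Int.subgroup_cyclic (P.map (Pi.evalAddMonoidHom (fun _ : ι => ℤ) p))
      obtain ⟨z, hzP, hzp⟩ := himg p
      have hmemJ : ∀ w, w ∈ P → ∃ k : ℤ, k • g0 = w p := by
        intro w hwP
        have hmm : w p ∈ P.map (Pi.evalAddMonoidHom (fun _ : ι => ℤ) p) := ⟨w, hwP, rfl⟩
        rwa [hg0J, AddSubgroup.mem_closure_singleton] at hmm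
      have hg00 : g0 ≠ 0 := by
        rintro rfl
        obtain ⟨k, hk⟩ := hmemJ z hzP
        simp only [smul_zero] at hk
        exact hzp hk.symm
      have hach : g0 ∈ P.map (Pi.evalAddMonoidHom (fun _ : ι => ℤ) p) := by
        rw [hg0J]; exact AddSubgroup.subset_closure rfl
      obtain ⟨y, hyP, hyp⟩ := hach
      refine ⟨g0, hg00, ?_, y, hyP, hyp⟩
      intro w hwP
      obtain ⟨k, hk⟩ := hmemJ w hwP
      exact ⟨k, by rw [← hk]; simp [smul_eq_mul, mul_comm]⟩
    choose g hgne hgdvd hgach using hgex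
    choose yg hygP hygp using hgach
    have hgabs : ∀ p : ι, |g p| ≤ 2 := by
      intro p
      obtain ⟨a, haE, hap⟩ := exists_elem P p (himg p)
      have h1 := (hH a haE).1 p
      have h2 : g p ∣ a p := hgdvd p a haE.1
      have h3 : |g p| ≤ |a p| :=
        Int.le_of_dvd (abs_pos.mpr hap) ((abs_dvd _ _).mpr ((dvd_abs _ _).mpr h2))
      omega
    have hachm : ∀ (p : ι) (t : ℤ), g p ∣ t → ∃ y ∈ P, y p = t := by
      intro p t ht
      refine ⟨(t / g p) • yg p, P.zsmul_mem (hygP p) _, ?_⟩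
      simp only [Pi.smul_apply, smul_eq_mul, hygp p]
      exact Int.ediv_mul_cancel ht
    choose ep hepE hepp using fun p => exists_elem P p (himg p)
    set T : Finset ι := univ.filter (fun p => |g p| = 2) with hTdef
    set gam : ι → ℤ := fun p => if 2 ∣ β p then β p else β p + 1 with hgamdef
    have hgam2 : ∀ p, 2 ∣ gam p := by
      intro p; simp only [hgamdef]; split_ifs with h
      · exact h
      · omega
    have hgamwin : ∀ p, β p ≤ gam p ∧ gam p ≤ β p + 1 := by
      intro p; simp only [hgamdef]; split_ifs <;> omega
    have hTg : ∀ p ∈ T, |g p| = 2 := fun p hp => (mem_filter.mp hp).2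
    have hnTg : ∀ p ∉ T, |g p| = 1 := by
      intro p hp
      have h1 := hgabs p
      have h2 := abs_pos.mpr (hgne p)
      have h3 : |g p| ≠ 2 := fun h => hp (mem_filter.mpr ⟨mem_univ p, h⟩)
      omega
    have hTdvd : ∀ p ∈ T, ∀ z ∈ P, (2:ℤ) ∣ z p := by
      intro p hp z hz
      have h2 := hgdvd p z hz
      rcases (abs_eq (by norm_num : (0:ℤ) ≤ 2)).mp (hTg p hp) with h' | h' <;> rw [h'] at h2
      · exact h2
      · exact neg_dvd.mp h2
    have hgdvd2 : ∀ p ∈ T, ∀ t : ℤ, 2 ∣ t → g p ∣ t := by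
      intro p hp t ht
      rcases (abs_eq (by norm_num : (0:ℤ) ≤ 2)).mp (hTg p hp) with h' | h' <;> rw [h']
      · exact ht
      · exact neg_dvd.mpr ht
    have hep2 : ∀ p ∈ T, |ep p p| = 2 := by
      intro p hp
      have h1 := (hH (ep p) (hepE p)).1 p
      have h2 : (2:ℤ) ∣ ep p p := hTdvd p hp (ep p) (hepE p).1
      have h3 := hepp p
      rcases abs_cases (ep p p) with ⟨he, _⟩ | ⟨he, _⟩ <;> omega
    have hepT0 : ∀ p ∈ T, ∀ p' ∈ T, p' ≠ p → ep p p' = 0 := by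
      intro p hp p' hp' hne
      have h2 : (2:ℤ) ∣ ep p p' := hTdvd p' hp' (ep p) (hepE p).1
      have h1 := (hH (ep p) (hepE p)).1 p'
      by_contra h0
      have habs2 : |ep p p'| = 2 := by
        rcases abs_cases (ep p p') with ⟨he, _⟩ | ⟨he, _⟩ <;> omega
      exact hne ((hH (ep p) (hepE p)).2 p' p habs2 (hep2 p hp))
    have hgamne : ∀ p ∈ T, (gam p : ℚ) ≠ d p := by
      intro p hp
      obtain ⟨y, hyP, hyp⟩ := hachm p (gam p) (hgdvd2 p hp _ (hgam2 p))
      exact hsl p (gam p) y hyP hyp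
    have hdqint : ∀ q, q ∉ T → ∀ t : ℤ, (t : ℚ) ≠ d q := by
      intro q hq t
      have h1 : g q ∣ t := by
        rcases (abs_eq (by norm_num : (0:ℤ) ≤ 1)).mp (hnTg q hq) with h' | h' <;> rw [h']
        · exact one_dvd t
        · exact neg_dvd.mpr (one_dvd t)
      obtain ⟨y, hyP, hyp⟩ := hachm q t h1
      exact hsl q t y hyP hyp
    have hfloorlt : ∀ q, q ∉ T → ((⌊d q⌋ : ℚ) < d q) :=
      fun q hq => lt_of_le_of_ne (Int.floor_le _) (hdqint q hq ⌊d q⌋)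
    have hceillt : ∀ q, q ∉ T → d q < (⌈d q⌉ : ℚ) :=
      fun q hq => lt_of_le_of_ne (Int.le_ceil _) (fun h => hdqint q hq ⌈d q⌉ h.symm)
    have hfloorwin : ∀ q, β q ≤ ⌊d q⌋ := fun q => Int.le_floor.mpr (hwin q).1
    have hceilwin : ∀ q, ⌈d q⌉ ≤ β q + 1 := by
      intro q
      have h2 := (hwin q).2
      have : d q ≤ ((β q + 1 : ℤ) : ℚ) := by push_cast; linarith
      exact Int.ceil_le.mpr this
    -- the core construction
    have core : ∀ Δ : ι → ℚ,
        (∀ s : ℚ, QPmem P (fun i => d i + s * Δ i)) →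
        (∀ p ∈ T, Δ p = (gam p : ℚ) - d p) →
        (T.Nonempty ∨ (T = ∅ ∧ ∃ q, Δ q ≠ 0)) →
        ∃ z ∈ P, ∀ i, β i ≤ z i ∧ z i ≤ β i + 1 := by
      intro Δ hΔQ hΔT hor
      set touch : Finset ι := univ.filter (fun q => q ∉ T ∧ Δ q ≠ 0) with htouchdef
      set sfun : ι → ℚ :=
        fun q => (if 0 < Δ q then ((⌈d q⌉ : ℚ) - d q) else (d q - (⌊d q⌋ : ℚ))) / |Δ q|
        with hsfundef
      have hspos : ∀ q ∈ touch, 0 < sfun q := by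
        intro q hq
        obtain ⟨-, hqT, hqΔ⟩ := mem_filter.mp hq
        apply div_pos
        · split_ifs with h
          · linarith [hceillt q hqT]
          · linarith [hfloorlt q hqT]
        · exact abs_pos.mpr hqΔ
      have finish : ∀ s₀ : ℚ, 0 < s₀ → (T.Nonempty → s₀ ≤ 1) →
          (∀ q ∈ touch, s₀ ≤ sfun q) →
          ((∃ q ∈ touch, s₀ = sfun q) ∨ (s₀ = 1 ∧ T.Nonempty)) →
          ∃ z ∈ P, ∀ i, β i ≤ z i ∧ z i ≤ β i + 1 := by
        intro s₀ hs₀pos hs₀le1 hs₀les hwit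
        set x : ι → ℚ := fun i => d i + s₀ * Δ i with hxdef
        have hxQ : QPmem P x := hΔQ s₀
        have hxwin : ∀ i, (β i : ℚ) ≤ x i ∧ x i ≤ (β i : ℚ) + 1 := by
          intro i
          by_cases hiT : i ∈ T
          · have hx : x i = d i + s₀ * ((gam i : ℚ) - d i) := by
              simp only [hxdef]; rw [hΔT i hiT]
            have h1 := (hwin i).1
            have h2 := (hwin i).2
            have hg1 : (β i : ℚ) ≤ (gam i : ℚ) := by exact_mod_cast (hgamwin i).1
            have hg2 : (gam i : ℚ) ≤ (β i : ℚ) + 1 := by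
              have := (hgamwin i).2; push_cast; exact_mod_cast this
            have hsle := hs₀le1 ⟨i, hiT⟩
            constructor
            · rw [hx]; nlinarith
            · rw [hx]; nlinarith
          · by_cases hΔ0 : Δ i = 0
            · have hx : x i = d i := by simp only [hxdef, hΔ0]; ring
              rw [hx]; exact hwin i
            · have hto : i ∈ touch := mem_filter.mpr ⟨mem_univ i, hiT, hΔ0⟩
              have hs := hs₀les i hto
              rcases lt_trichotomy (Δ i) 0 with hneg | h0 | hpos
              · have hkey : sfun i * Δ i = (⌊d i⌋ : ℚ) - d i := by
                  simp only [hsfundef]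
                  rw [if_neg (by linarith), abs_of_neg hneg,
                    div_mul_eq_mul_div, mul_div_assoc, div_neg, div_self hΔ0]
                  ring
                have hlow : d i + sfun i * Δ i ≤ x i := by
                  simp only [hxdef]
                  have := mul_le_mul_of_nonpos_right hs (le_of_lt hneg)
                  linarith
                constructor
                · rw [hkey] at hlow
                  have hfw : ((β i : ℚ)) ≤ (⌊d i⌋ : ℚ) := by exact_mod_cast hfloorwin i
                  linarith
                · have : x i ≤ d i := by
                    simp only [hxdef]
                    nlinarith
                  linarith [(hwin i).2]
              · exact absurd h0 hΔ0
              · have hkey : sfun i * Δ i = (⌈d i⌉ : ℚ) - d i := by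
                  simp only [hsfundef]
                  rw [if_pos hpos, abs_of_pos hpos]
                  exact div_mul_cancel₀ _ hΔ0
                have hup : x i ≤ d i + sfun i * Δ i := by
                  simp only [hxdef]
                  have := mul_le_mul_of_nonneg_right hs (le_of_lt hpos)
                  linarith
                constructor
                · have : d i ≤ x i := by
                    simp only [hxdef]; nlinarith
                  linarith [(hwin i).1]
                · rw [hkey] at hup
                  have hcw : ((⌈d i⌉ : ℚ)) ≤ (β i : ℚ) + 1 := by
                    have := hceilwin i; push_cast; exact_mod_cast this
                  linarith
        rcases hwit with ⟨qs, hqs, hseq⟩ | ⟨hs1, p0, hp0⟩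
        · obtain ⟨-, hqsT, hqsΔ⟩ := mem_filter.mp hqs
          set γs : ℤ := if 0 < Δ qs then ⌈d qs⌉ else ⌊d qs⌋ with hγsdef
          have hxqs : x qs = (γs : ℚ) := by
            simp only [hxdef, hseq, hγsdef]
            rcases lt_trichotomy (Δ qs) 0 with hneg | h0 | hpos
            · rw [if_neg (by linarith)]
              have hkey : sfun qs * Δ qs = (⌊d qs⌋ : ℚ) - d qs := by
                simp only [hsfundef]
                rw [if_neg (by linarith), abs_of_neg hneg,
                  div_mul_eq_mul_div, mul_div_assoc, div_neg, div_self hqsΔ]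
                ring
              rw [hkey]; ring
            · exact absurd h0 hqsΔ
            · rw [if_pos hpos]
              have hkey : sfun qs * Δ qs = (⌈d qs⌉ : ℚ) - d qs := by
                simp only [hsfundef]
                rw [if_pos hpos, abs_of_pos hpos]
                exact div_mul_cancel₀ _ hqsΔ
              rw [hkey]; ring
          have hdvd : g qs ∣ γs := by
            rcases (abs_eq (by norm_num : (0:ℤ) ≤ 1)).mp (hnTg qs hqsT) with h' | h' <;> rw [h']
            · exact one_dvd _
            · exact neg_dvd.mpr (one_dvd _)
          obtain ⟨y, hyP, hyp⟩ := hachm qs γs hdvd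
          exact KLG_key n IH hcard P hH β qs γs y hyP hyp x hxQ hxwin hxqs
        · have hxp0 : x p0 = ((gam p0 : ℤ) : ℚ) := by
            simp only [hxdef]
            rw [hΔT p0 hp0, hs1]
            ring
          obtain ⟨y, hyP, hyp⟩ := hachm p0 (gam p0) (hgdvd2 p0 hp0 _ (hgam2 p0))
          exact KLG_key n IH hcard P hH β p0 (gam p0) y hyP hyp x hxQ hxwin hxp0
      rcases hor with hT2 | ⟨hTemp, q0, hq0⟩
      · by_cases htne : touch.Nonempty
        · rcases le_total 1 (touch.inf' htne sfun) with h1le | hle1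
          · refine finish 1 one_pos (fun _ => le_refl 1) (fun q hq => ?_) (Or.inr ⟨rfl, hT2⟩)
            exact le_trans h1le (Finset.inf'_le sfun hq)
          · obtain ⟨qs, hqs, heq⟩ := Finset.exists_mem_eq_inf' htne sfun
            refine finish (touch.inf' htne sfun) ?_ (fun _ => hle1)
              (fun q hq => Finset.inf'_le sfun hq) (Or.inl ⟨qs, hqs, heq⟩)
            exact (Finset.lt_inf'_iff htne).mpr hspos
        · exact finish 1 one_pos (fun _ => le_refl 1)
            (fun q hq => absurd ⟨q, hq⟩ htne) (Or.inr ⟨rfl, hT2⟩)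
      · have htne : touch.Nonempty :=
          ⟨q0, mem_filter.mpr ⟨mem_univ q0,
            by rw [hTemp]; exact Finset.notMem_empty q0, hq0⟩⟩
        obtain ⟨qs, hqs, heq⟩ := Finset.exists_mem_eq_inf' htne sfun
        refine finish (touch.inf' htne sfun) ((Finset.lt_inf'_iff htne).mpr hspos)
          (fun hT3 => absurd hT3 (by rw [hTemp]; exact Finset.not_nonempty_empty))
          (fun q hq => Finset.inf'_le sfun hq) (Or.inl ⟨qs, hqs, heq⟩)
    by_cases hT2 : T.Nonempty
    · have hsum : ∀ (s : Finset ι), ∀ c : ι → ℚ,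
          QPmem P (fun i => d i + ∑ p ∈ s, c p * ((ep p i : ℤ) : ℚ)) := by
        intro s
        induction s using Finset.induction_on with
        | empty => intro c; simpa using hdQ
        | @insert a s ha ih =>
          intro c
          have h2 := (ih c).add_mul_cast (hepE a).1 (c a)
          convert h2 using 1
          funext i
          rw [Finset.sum_insert ha]
          ring
      set Δ : ι → ℚ :=
        fun i => ∑ p ∈ T, (((gam p : ℚ) - d p) / ((ep p p : ℤ) : ℚ)) * ((ep p i : ℤ) : ℚ)
        with hΔdef
      have hΔT : ∀ p ∈ T, Δ p = (gam p : ℚ) - d p := by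
        intro p hp
        simp only [hΔdef]
        rw [Finset.sum_eq_single_of_mem p hp]
        · have hne : ((ep p p : ℤ) : ℚ) ≠ 0 := Int.cast_ne_zero.mpr (hepp p)
          exact div_mul_cancel₀ _ hne
        · intro p' hp' hne
          rw [hepT0 p' hp' p hp hne.symm]
          simp
      have hΔQ : ∀ s : ℚ, QPmem P (fun i => d i + s * Δ i) := by
        intro s
        have h2 := hsum T (fun p => s * (((gam p : ℚ) - d p) / ((ep p p : ℤ) : ℚ)))
        convert h2 using 1
        funext i
        simp only [hΔdef]
        rw [Finset.mul_sum]
        congr 1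
        exact Finset.sum_congr rfl (fun p _ => by ring)
      exact core Δ hΔQ hΔT (Or.inl hT2)
    · have hTemp : T = ∅ := Finset.not_nonempty_iff_eq_empty.mp hT2
      obtain ⟨p0⟩ := hempcase
      have hΔT : ∀ p ∈ T, ((fun i => ((ep p0 i : ℤ) : ℚ)) p = (gam p : ℚ) - d p) := by
        intro p hp; rw [hTemp] at hp; exact absurd hp (Finset.notMem_empty p)
      refine core (fun i => ((ep p0 i : ℤ) : ℚ)) (fun s => ?_) hΔT (Or.inr ⟨hTemp, p0, ?_⟩)
      · exact hdQ.add_mul_cast (hepE p0).1 s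
      · exact Int.cast_ne_zero.mpr (hepp p0)


section Backward

theorem backward_dir {m n : ℕ} (v : Fin m → Fin n → ℤ)
    (h : ∀ a : Fin m → ℤ, IsElemRel v a →
        (∀ i, |a i| ≤ 2) ∧ ∀ i i', |a i| = 2 → |a i'| = 2 → i = i') :
    AFR v := by
  intro a b hab w hcint hxrat
  obtain ⟨c, hcfix, hcw⟩ := hcint
  obtain ⟨x, hxbox, hxw⟩ := hxrat
  classical
  set P : AddSubgroup (Fin m → ℤ) :=
    { carrier := {z | (∀ j, ∑ i, z i * v i j = 0) ∧ ∀ i, a i = b i → z i = 0}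
      zero_mem' := ⟨fun j => by simp, fun i _ => rfl⟩
      add_mem' := by
        rintro z1 z2 ⟨h1, h1'⟩ ⟨h2, h2'⟩
        refine ⟨fun j => ?_, fun i hi => by simp [h1' i hi, h2' i hi]⟩
        simp only [Pi.add_apply, add_mul]
        rw [Finset.sum_add_distrib, h1 j, h2 j]
        ring
      neg_mem' := by
        rintro z ⟨h1, h1'⟩
        refine ⟨fun j => ?_, fun i hi => by simp [h1' i hi]⟩
        simp only [Pi.neg_apply, neg_mul]
        rw [Finset.sum_neg_distrib, h1 j]
        ring } with hPdef
  have hPmem : ∀ z : Fin m → ℤ,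
      z ∈ P ↔ (∀ j, ∑ i, z i * v i j = 0) ∧ ∀ i, a i = b i → z i = 0 :=
    fun z => Iff.rfl
  have hH : Hcond P := by
    intro e heE
    obtain ⟨heP, hene, hemin⟩ := heE
    obtain ⟨herel, hefix⟩ := (hPmem e).mp heP
    have helem : IsElemRel v e := by
      refine ⟨hene, herel, ?_⟩
      intro b' hb0 hbrel
      have hb'P : b' ∈ P := (hPmem b').mpr ⟨hbrel, fun i hi => hb0 i (hefix i hi)⟩
      obtain ⟨l, hl⟩ := hemin b' hb'P hb0
      exact ⟨l, fun i => by rw [hl]; simp [mul_comm]⟩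
    exact h e helem
  set d : Fin m → ℚ := fun i => x i - (c i : ℚ) with hddef
  have hxfix : ∀ i, a i = b i → x i = (a i : ℚ) := by
    intro i hi
    have h1 := (hxbox i).1
    have h2 := (hxbox i).2
    rw [← hi] at h2
    linarith
  have hdfix : ∀ i, a i = b i → d i = 0 := by
    intro i hi
    simp only [hddef]
    rw [hxfix i hi, hcfix i hi]
    ring
  have hdQ : QPmem P d := by
    set N : ℤ := ∏ i, ((d i).den : ℤ) with hNdef
    have hNpos : 0 < N := Finset.prod_pos (fun i _ => by exact_mod_cast (d i).den_pos)
    have hint : ∀ i, ∃ zi : ℤ, (zi : ℚ) = N * d i := by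
      intro i
      have hdvd : ((d i).den : ℤ) ∣ N := Finset.dvd_prod_of_mem _ (mem_univ i)
      obtain ⟨k, hk⟩ := hdvd
      refine ⟨k * (d i).num, ?_⟩
      have hden := Rat.mul_den_eq_num (d i)
      rw [hk]
      push_cast
      linear_combination (-(k : ℚ)) * hden
    choose zfun hz using hint
    refine ⟨N, hNpos, zfun, (hPmem zfun).mpr ⟨?_, ?_⟩, hz⟩
    · intro j
      have hrel : ((∑ i, zfun i * v i j : ℤ) : ℚ) = 0 := by
        push_cast
        have heach : ∀ i, (zfun i : ℚ) * (v i j : ℚ) = (N : ℚ) * (d i * (v i j : ℚ)) :=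
          fun i => by rw [hz i]; ring
        rw [Finset.sum_congr rfl (fun i _ => heach i), ← Finset.mul_sum]
        have hsum0 : ∑ i, d i * (v i j : ℚ) = 0 := by
          simp only [hddef, sub_mul]
          rw [Finset.sum_sub_distrib]
          have hx0 : ∑ i, x i * (v i j : ℚ) = (w j : ℚ) := (hxw j).symm
          have hc0 : ∑ i, (c i : ℚ) * (v i j : ℚ) = (w j : ℚ) := by
            exact_mod_cast (hcw j).symm
          rw [hx0, hc0]
          ring
        rw [hsum0]
        ring
      exact_mod_cast hrel
    · intro i hi
      have h1 := hz i
      rw [hdfix i hi] at h1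
      have : (zfun i : ℚ) = 0 := by rw [h1]; ring
      exact_mod_cast this
  set β : Fin m → ℤ :=
    fun i => if a i = b i then 0 else max (a i - c i) (min (b i - c i - 1) ⌊d i⌋) with hβdef
  have hdlo : ∀ i, ((a i - c i : ℤ) : ℚ) ≤ d i := by
    intro i
    have := (hxbox i).1
    simp only [hddef]
    push_cast
    linarith
  have hdhi : ∀ i, d i ≤ ((b i - c i : ℤ) : ℚ) := by
    intro i
    have := (hxbox i).2
    simp only [hddef]
    push_cast
    linarith
  have hwin : ∀ i, (β i : ℚ) ≤ d i ∧ d i ≤ (β i : ℚ) + 1 := by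
    intro i
    by_cases hi : a i = b i
    · simp only [hβdef, if_pos hi]
      rw [hdfix i hi]
      norm_num
    · simp only [hβdef, if_neg hi]
      have hfl : (⌊d i⌋ : ℚ) ≤ d i := Int.floor_le _
      have hfl2 : d i < (⌊d i⌋ : ℚ) + 1 := Int.lt_floor_add_one _
      have hlo := hdlo i
      have hhi := hdhi i
      rcases le_total (b i - c i - 1) ⌊d i⌋ with hc' | hc'
      · rw [min_eq_left hc']
        have hc'' : ((b i - c i - 1 : ℤ) : ℚ) ≤ (⌊d i⌋ : ℚ) := by exact_mod_cast hc'
        rcases max_cases (a i - c i) (b i - c i - 1) with ⟨hmx, hside⟩ | ⟨hmx, hside⟩ <;>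
          rw [hmx]
        · have hside' : ((b i - c i - 1 : ℤ) : ℚ) ≤ ((a i - c i : ℤ) : ℚ) := by
            exact_mod_cast hside
          refine ⟨hlo, ?_⟩
          push_cast at hside' hhi ⊢
          linarith
        · constructor
          · push_cast at hc'' hfl ⊢
            linarith
          · push_cast at hhi ⊢
            linarith
      · rw [min_eq_right hc']
        have hc'' : (⌊d i⌋ : ℚ) ≤ ((b i - c i - 1 : ℤ) : ℚ) := by exact_mod_cast hc'
        rcases max_cases (a i - c i) ⌊d i⌋ with ⟨hmx, hside⟩ | ⟨hmx, hside⟩ <;> rw [hmx]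
        · have hside' : (⌊d i⌋ : ℚ) ≤ ((a i - c i : ℤ) : ℚ) := by exact_mod_cast hside
          refine ⟨hlo, ?_⟩
          push_cast at hside' hfl2 ⊢
          linarith
        · exact ⟨hfl, by linarith⟩
  have hβrange : ∀ i, a i ≠ b i → (a i - c i ≤ β i ∧ β i + 1 ≤ b i - c i) := by
    intro i hi
    have hlohi : a i < b i := lt_of_le_of_ne (hab i) hi
    simp only [hβdef, if_neg hi]
    constructor
    · exact le_max_left _ _
    · have : max (a i - c i) (min (b i - c i - 1) ⌊d i⌋) ≤ b i - c i - 1 :=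
        max_le (by omega) (min_le_left _ _)
      omega
  obtain ⟨z, hzP, hzwin⟩ :=
    KLG_all (Fintype.card (Fin m)) (Fin m) (le_refl _) P hH β d hwin hdQ
  obtain ⟨hzrel, hzfix⟩ := (hPmem z).mp hzP
  refine ⟨c + z, fun i => ?_, fun j => ?_⟩
  · by_cases hi : a i = b i
    · have hz0 : z i = 0 := hzfix i hi
      have hci : c i = a i := hcfix i hi
      simp only [Pi.add_apply, hz0, hci]
      omega
    · have h1 := (hzwin i).1
      have h2 := (hzwin i).2
      have h3 := hβrange i hi
      simp only [Pi.add_apply]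
      omega
  · have h1 := hzrel j
    have h2 := hcw j
    simp only [Pi.add_apply, add_mul]
    rw [Finset.sum_add_distrib, h1, ← h2]
    ring

end Backward

section Forward

theorem fwd_core {m n : ℕ} (v : Fin m → Fin n → ℤ) (hA : AFR v)
    (a0 : Fin m → ℤ) (hE : IsElemRel v a0) (k : Fin m) (hk : a0 k ≠ 0)
    (aB bB : Fin m → ℤ)
    (hle : ∀ i, aB i ≤ bB i)
    (hfix0 : ∀ i, aB i = bB i → aB i = 0)
    (hzero : ∀ i, a0 i = 0 → aB i = 0 ∧ bB i = 0)
    (hxin : ∀ i, (aB i : ℚ) ≤ (a0 i : ℚ) / (a0 k : ℚ) ∧ (a0 i : ℚ) / (a0 k : ℚ) ≤ (bB i : ℚ)) :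
    ∃ l : ℤ, ∀ i, aB i ≤ l * a0 i ∧ l * a0 i ≤ bB i := by
  have hka : ((a0 k : ℤ) : ℚ) ≠ 0 := Int.cast_ne_zero.mpr hk
  have hrelx : ∀ j, ((0 : ℤ) : ℚ) = ∑ i, ((a0 i : ℚ) / (a0 k : ℚ)) * (v i j : ℚ) := by
    intro j
    have hrel := hE.2.1 j
    have h1 : ∑ i, ((a0 i : ℚ) / (a0 k : ℚ)) * (v i j : ℚ)
        = (∑ i, (a0 i : ℚ) * (v i j : ℚ)) / (a0 k : ℚ) := by
      rw [Finset.sum_div]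
      exact Finset.sum_congr rfl fun i _ => by ring
    have h2 : (∑ i, (a0 i : ℚ) * (v i j : ℚ)) = 0 := by exact_mod_cast hrel
    rw [h1, h2]
    simp
  obtain ⟨y, hybox, hyrel⟩ := hA aB bB hle (fun _ => 0)
    ⟨0, fun i hi => (hfix0 i hi).symm, fun j => by simp⟩
    ⟨fun i => (a0 i : ℚ) / (a0 k : ℚ), hxin, fun j => hrelx j⟩
  have hy0 : ∀ i, a0 i = 0 → y i = 0 := by
    intro i hi
    obtain ⟨hz1, hz2⟩ := hzero i hi
    have h1 := (hybox i).1
    have h2 := (hybox i).2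
    omega
  have hyrel' : ∀ j, ∑ i, y i * v i j = 0 := fun j => (hyrel j).symm
  obtain ⟨l, hl⟩ := hE.2.2 y hy0 hyrel'
  exact ⟨l, fun i => by rw [← hl i]; exact hybox i⟩

theorem forward_dir {m n : ℕ} (v : Fin m → Fin n → ℤ) (hA : AFR v) :
    ∀ a : Fin m → ℤ, IsElemRel v a →
      (∀ i, |a i| ≤ 2) ∧ ∀ i i', |a i| = 2 → |a i'| = 2 → i = i' := by
  intro a0 hE
  classical
  constructor
  · intro k
    by_contra hk3
    push_neg at hk3
    have hk : a0 k ≠ 0 := by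
      intro h0
      rw [h0] at hk3
      simp at hk3
    set x : Fin m → ℚ := fun i => (a0 i : ℚ) / (a0 k : ℚ) with hxdef
    have hka : ((a0 k : ℤ) : ℚ) ≠ 0 := Int.cast_ne_zero.mpr hk
    set aB : Fin m → ℤ :=
      fun i => if i = k then 1 else if a0 i = 0 then 0 else ⌊x i⌋ with haBdef
    set bB : Fin m → ℤ :=
      fun i => if i = k then 2 else if a0 i = 0 then 0 else ⌊x i⌋ + 1 with hbBdef
    obtain ⟨l, hl⟩ := fwd_core v hA a0 hE k hk aB bB
      (by
        intro i
        simp only [haBdef, hbBdef]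
        split_ifs <;> omega)
      (by
        intro i hi
        simp only [haBdef, hbBdef] at hi ⊢
        split_ifs at hi ⊢ <;> omega)
      (by
        intro i hi
        have hik : i ≠ k := fun h => hk (h ▸ hi)
        simp [haBdef, hbBdef, hik, hi])
      (by
        intro i
        by_cases hik : i = k
        · subst hik
          simp only [haBdef, hbBdef, if_pos rfl]
          rw [div_self hka]
          norm_num
        · by_cases h0 : a0 i = 0
          · simp only [haBdef, hbBdef, if_neg hik, if_pos h0, h0]
            norm_num
          · simp only [haBdef, hbBdef, if_neg hik, if_neg h0]
            constructor
            · exact Int.floor_le _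
            · push_cast
              linarith [Int.lt_floor_add_one ((a0 i : ℚ) / (a0 k : ℚ))])
    have hlk := hl k
    simp only [haBdef, hbBdef, if_pos rfl] at hlk
    obtain ⟨h1, h2⟩ := hlk
    have hlne : l ≠ 0 := by
      rintro rfl
      simp at h1
    have habs : |l * a0 k| ≤ 2 := by
      rcases abs_cases (l * a0 k) with ⟨he, _⟩ | ⟨he, _⟩ <;> omega
    rw [abs_mul] at habs
    have h6 : 1 ≤ |l| := Int.one_le_abs hlne
    nlinarith [hk3, abs_nonneg l, abs_nonneg (a0 k)]
  · intro k j h2k h2j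
    by_contra hne
    have hk : a0 k ≠ 0 := by
      intro h0
      rw [h0] at h2k
      simp at h2k
    have hka : ((a0 k : ℤ) : ℚ) ≠ 0 := Int.cast_ne_zero.mpr hk
    have hjk : a0 j = a0 k ∨ a0 j = -(a0 k) := abs_eq_abs.mp (h2k.symm ▸ h2j)
    set x : Fin m → ℚ := fun i => (a0 i : ℚ) / (a0 k : ℚ) with hxdef
    set aB : Fin m → ℤ :=
      fun i => if i = k then 1 else if i = j then (if a0 j = a0 k then 0 else -1)
        else if a0 i = 0 then 0 else ⌊x i⌋ with haBdef
    set bB : Fin m → ℤ :=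
      fun i => if i = k then 2 else if i = j then (if a0 j = a0 k then 1 else 0)
        else if a0 i = 0 then 0 else ⌊x i⌋ + 1 with hbBdef
    have hjne : j ≠ k := fun h => hne h.symm
    obtain ⟨l, hl⟩ := fwd_core v hA a0 hE k hk aB bB
      (by
        intro i
        simp only [haBdef, hbBdef]
        split_ifs <;> omega)
      (by
        intro i hi
        simp only [haBdef, hbBdef] at hi ⊢
        split_ifs at hi ⊢ <;> omega)
      (by
        intro i hi
        have hik : i ≠ k := fun h => hk (h ▸ hi)
        have hij : i ≠ j := by
          rintro rfl
          rcases hjk with h' | h' <;> rw [hi] at h' <;> omega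
        simp [haBdef, hbBdef, hik, hij, hi])
      (by
        intro i
        by_cases hik : i = k
        · subst hik
          simp only [haBdef, hbBdef, if_pos rfl]
          rw [div_self hka]
          norm_num
        · by_cases hij : i = j
          · subst hij
            simp only [haBdef, hbBdef, if_neg hik, if_pos rfl]
            rcases hjk with h' | h'
            · rw [if_pos h', h', div_self hka]
              norm_num
            · have hcond : ¬ a0 i = a0 k := by omega
              simp only [if_neg hcond]
              rw [h']
              push_cast
              rw [neg_div, div_self hka]
              norm_num
          · by_cases h0 : a0 i = 0
            · simp only [haBdef, hbBdef, if_neg hik, if_neg hij, if_pos h0, h0]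
              norm_num
            · simp only [haBdef, hbBdef, if_neg hik, if_neg hij, if_neg h0]
              constructor
              · exact Int.floor_le _
              · push_cast
                linarith [Int.lt_floor_add_one ((a0 i : ℚ) / (a0 k : ℚ))])
    have hlk := hl k
    simp only [haBdef, hbBdef, if_pos rfl] at hlk
    have hlj := hl j
    simp only [haBdef, hbBdef] at hlj
    rw [if_neg hjne, if_neg hjne] at hlj
    simp only [if_true, ite_true] at hlj
    have hak : a0 k = 2 ∨ a0 k = -2 := by
      rcases abs_cases (a0 k) with ⟨he, _⟩ | ⟨he, _⟩ <;> omega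
    rcases hjk with h' | h'
    · rw [if_pos h', h'] at hlj
      rcases hak with h'' | h'' <;> rw [h''] at hlk hlj <;> omega
    · rw [if_neg (by omega : ¬ a0 j = a0 k), h'] at hlj
      rcases hak with h'' | h'' <;> rw [h''] at hlk hlj <;> omega

end Forward

theorem stmt2 {m n : ℕ} (v : Fin m → Fin n → ℤ) :
    AFR v ↔
      ∀ a : Fin m → ℤ, IsElemRel v a →
        (∀ i, |a i| ≤ 2) ∧ ∀ i i', |a i| = 2 → |a i'| = 2 → i = i' :=
  ⟨forward_dir v, backward_dir v⟩
end

section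
/- If v_1,...,v_m ∈ ℤ^n are almost Farkas-related and there is an elementary integral relation Σ_{i=1}^m a_i v_i = 0 with a_1 = 2, then a_i ∈ {-1, 0, 1} for all i ≥ 2. -/
open Finset

theorem stmt3 {m n : ℕ} (v : Fin m → Fin n → ℤ) (hafr : AFR v)
    (a : Fin m → ℤ) (ha : IsElemRel v a) (i₀ : Fin m) (h2 : a i₀ = 2) :
    ∀ i, i ≠ i₀ → a i = -1 ∨ a i = 0 ∨ a i = 1 := by
  classical
  obtain ⟨-, hrel, helem⟩ := ha
  intro i₁ hne
  by_contra hcon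
  have hm1 : a i₁ ≠ -1 := fun h => hcon (Or.inl h)
  have h0 : a i₁ ≠ 0 := fun h => hcon (Or.inr (Or.inl h))
  have hp1 : a i₁ ≠ 1 := fun h => hcon (Or.inr (Or.inr h))
  set L : Fin m → ℤ := fun i => if 0 < a i then -(a i / 2) - 1 else (-(a i)) / 2 with hLdef
  set α : Fin m → ℤ := fun i => if i = i₀ then 0 else if a i = 0 then 0 else L i with hαdef
  set β : Fin m → ℤ := fun i => if i = i₀ then 1 else if a i = 0 then 0 else L i + 1 with hβdef
  have hab : ∀ i, α i ≤ β i := by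
    intro i
    simp only [hαdef, hβdef]
    split_ifs <;> omega
  have hL1 : ∀ i, 2 * L i ≤ -(a i) ∧ -(a i) ≤ 2 * L i + 2 := by
    intro i
    simp only [hLdef]
    split_ifs with h <;> omega
  have hcint : ∃ c : Fin m → ℤ, (∀ i, α i = β i → c i = α i) ∧
      ∀ j, v i₀ j = ∑ i, c i * v i j := by
    refine ⟨fun i => if i = i₀ then 1 else 0, ?_, ?_⟩
    · intro i hi
      simp only [hαdef, hβdef] at hi ⊢
      split_ifs at hi ⊢ <;> omega
    · intro j
      simp [ite_mul]
  have hrelQ : ∀ j, ∑ i, (a i : ℚ) * (v i j : ℚ) = 0 := by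
    intro j
    exact_mod_cast congrArg (Int.cast : ℤ → ℚ) (hrel j)
  have hxrat : ∃ x : Fin m → ℚ, (∀ i, (α i : ℚ) ≤ x i ∧ x i ≤ (β i : ℚ)) ∧
      ∀ j, ((v i₀ j : ℤ) : ℚ) = ∑ i, x i * (v i j : ℚ) := by
    refine ⟨fun i => (if i = i₀ then 1 else 0) - (a i : ℚ) / 2, ?_, ?_⟩
    · intro i
      by_cases hi : i = i₀
      · subst hi
        simp only [hαdef, hβdef, if_pos rfl, h2]
        norm_num
      · have h1 : ((2 * L i : ℤ) : ℚ) ≤ ((-(a i) : ℤ) : ℚ) := by exact_mod_cast (hL1 i).1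
        have h2' : ((-(a i) : ℤ) : ℚ) ≤ ((2 * L i + 2 : ℤ) : ℚ) := by exact_mod_cast (hL1 i).2
        push_cast at h1 h2'
        by_cases h0i : a i = 0
        · simp only [hαdef, hβdef, if_neg hi, if_pos h0i, h0i]
          norm_num
        · simp only [hαdef, hβdef, if_neg hi, if_neg h0i]
          constructor
          · push_cast
            linarith
          · push_cast
            linarith
    · intro j
      have hterm : ∀ i, ((if i = i₀ then (1:ℚ) else 0) - (a i : ℚ) / 2) * (v i j : ℚ)
          = (if i = i₀ then (v i j : ℚ) else 0) - (1/2) * ((a i : ℚ) * (v i j : ℚ)) := by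
        intro i
        split_ifs <;> ring
      simp only [hterm]
      rw [Finset.sum_sub_distrib, Finset.sum_ite_eq', ← Finset.mul_sum, hrelQ j]
      simp
  obtain ⟨y, hy, hyw⟩ := hafr α β hab (v i₀) hcint hxrat
  have hsupp : ∀ i, a i = 0 → y i - (if i = i₀ then 1 else 0) = 0 := by
    intro i hi
    have hii : i ≠ i₀ := by
      intro h'
      rw [h', h2] at hi
      omega
    have hyi := hy i
    simp only [hαdef, hβdef, if_neg hii, if_pos hi] at hyi
    simp only [if_neg hii]
    omega
  have hrel0 : ∀ j, ∑ i, (y i - (if i = i₀ then 1 else 0)) * v i j = 0 := by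
    intro j
    have hsum : ∑ i, (y i - if i = i₀ then 1 else 0) * v i j
        = (∑ i, y i * v i j) - ∑ i, (if i = i₀ then (1:ℤ) else 0) * v i j := by
      rw [← Finset.sum_sub_distrib]
      congr 1
      ext i
      ring
    rw [hsum, ← hyw j]
    simp [ite_mul]
  obtain ⟨l, hl⟩ := helem (fun i => y i - (if i = i₀ then 1 else 0)) hsupp hrel0
  have hl' : ∀ i, y i - (if i = i₀ then 1 else 0) = l * a i := hl
  have hyi₀ := hy i₀
  simp only [hαdef, hβdef, if_pos rfl] at hyi₀
  have hli₀ := hl' i₀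
  simp only [if_pos rfl, h2] at hli₀
  have hl0 : l = 0 := by omega
  have hyi₁ := hl' i₁
  simp only [if_neg hne, hl0, zero_mul, sub_zero] at hyi₁
  have hbd := hy i₁
  simp only [hαdef, hβdef, if_neg hne, if_neg h0, hLdef, hyi₁] at hbd
  rcases lt_or_ge 0 (a i₁) with h | h
  · rw [if_pos h] at hbd
    omega
  · rw [if_neg (not_lt.mpr h)] at hbd
    omega
end

section
/- Let v_1,...,v_m ∈ ℤ^n be nonzero vectors such that every elementary integral relation among them has all coefficients of absolute value at most 2 with at most one coefficient of absolute value 2. Then there exists a subset J ⊆ {1,...,m} such that the vectors {v_i : i ∈ J} form a ℤ-basis of the subgroup Σ_{i=1}^m ℤ v_i. -/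
open Finset

private lemma stmt4_key {m n : ℕ} (v : Fin m → Fin n → ℤ) (hv : ∀ i, v i ≠ 0)
    (hER : ∀ a : Fin m → ℤ, (((∃ i, a i ≠ 0) ∧ (∀ j, ∑ i, a i * v i j = 0) ∧
      ∀ b : Fin m → ℤ, (∀ i, a i = 0 → b i = 0) → (∀ j, ∑ i, b i * v i j = 0) →
        ∃ l : ℤ, ∀ i, b i = l * a i)) →
      (∀ i, |a i| ≤ 2) ∧ ∀ i i', |a i| = 2 → |a i'| = 2 → i = i')
    (J : Finset (Fin m)) :
    ∃ J', J' ⊆ J ∧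
      (∀ c : Fin m → ℤ, (∀ j, ∑ i ∈ J', c i * v i j = 0) → ∀ i ∈ J', c i = 0) ∧
      (∀ w : Fin n → ℤ, (∃ c : Fin m → ℤ, ∀ j, w j = ∑ i ∈ J, c i * v i j) →
        ∃ c : Fin m → ℤ, ∀ j, w j = ∑ i ∈ J', c i * v i j) := by
  classical
  induction J using Finset.strongInduction with
  | _ J IH =>
  by_cases hind : ∀ c : Fin m → ℤ, (∀ j, ∑ i ∈ J, c i * v i j = 0) → ∀ i ∈ J, c i = 0
  · exact ⟨J, Finset.Subset.refl J, hind, fun w hw => hw⟩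
  push_neg at hind
  obtain ⟨c₀, hc₀rel, i₁, hi₁J, hi₁⟩ := hind
  -- the predicate: there is a nontrivial relation with support of size k contained in J
  set P : ℕ → Prop := fun k => ∃ c : Fin m → ℤ,
    (∀ i, c i ≠ 0 → i ∈ J) ∧ (∃ i, c i ≠ 0) ∧
    ((Finset.univ.filter fun i => c i ≠ 0).card = k) ∧
    (∀ j, ∑ i, c i * v i j = 0) with hPdef
  have hPex : ∃ k, P k := by
    refine ⟨_, fun i => if i ∈ J then c₀ i else 0, fun i hi => ?_, ⟨i₁, by simp [hi₁J, hi₁]⟩,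
      rfl, fun j => ?_⟩
    · by_contra hiJ; simp [hiJ] at hi
    · rw [← Finset.sum_subset (Finset.subset_univ J)
        (fun i _ hiJ => by simp [hiJ])]
      rw [← hc₀rel j]
      exact Finset.sum_congr rfl fun i hi => by simp [hi]
  obtain ⟨c, hcJ, hcne, hccard, hcrel⟩ := Nat.find_spec hPex
  have hmin' : ∀ k < Nat.find hPex, ¬ P k := fun k hk => Nat.find_min hPex hk
  obtain ⟨i₀, hi₀⟩ := hcne
  have hi₀S : i₀ ∈ Finset.univ.filter fun i => c i ≠ 0 := by simp [hi₀]
  -- minimality: any relation supported inside supp c, vanishing at i₀, is zero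
  have hmin : ∀ d : Fin m → ℤ, (∀ i, c i = 0 → d i = 0) → (∀ j, ∑ i, d i * v i j = 0) →
      d i₀ = 0 → ∀ i, d i = 0 := by
    intro d hdc hdrel hdi₀
    by_contra hd
    push_neg at hd
    obtain ⟨i', hi'⟩ := hd
    have hsub : (Finset.univ.filter fun i => d i ≠ 0) ⊆
        (Finset.univ.filter fun i => c i ≠ 0) := by
      intro i hi
      simp only [Finset.mem_filter, Finset.mem_univ, true_and] at hi ⊢
      exact fun h => hi (hdc i h)
    have hss : (Finset.univ.filter fun i => d i ≠ 0) ⊂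
        (Finset.univ.filter fun i => c i ≠ 0) := by
      refine (Finset.ssubset_iff_of_subset hsub).2 ⟨i₀, hi₀S, by simp [hdi₀]⟩
    have hcard : (Finset.univ.filter fun i => d i ≠ 0).card < Nat.find hPex := by
      rw [← hccard]; exact Finset.card_lt_card hss
    exact hmin' _ hcard ⟨d, fun i hi => hcJ i (fun h => hi (hdc i h)), ⟨i', hi'⟩, rfl, hdrel⟩
  -- proportionality
  have hprop : ∀ b : Fin m → ℤ, (∀ i, c i = 0 → b i = 0) → (∀ j, ∑ i, b i * v i j = 0) →
      ∀ i, c i₀ * b i = b i₀ * c i := by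
    intro b hb hbrel i
    have h0 := hmin (fun i => c i₀ * b i - b i₀ * c i)
      (fun i hi => by simp [hi, hb i hi])
      (fun j => by
        simp only [sub_mul, Finset.sum_sub_distrib, mul_assoc, ← Finset.mul_sum,
          hcrel j, hbrel j, mul_zero, sub_zero])
      (by ring) i
    linarith [h0]
  -- gcd reduction
  set g : ℤ := Finset.gcd Finset.univ c with hg
  have hgdvd : ∀ i, g ∣ c i := fun i => Finset.gcd_dvd (Finset.mem_univ i)
  have hgne : g ≠ 0 := fun h => hi₀ (Finset.gcd_eq_zero_iff.1 h i₀ (Finset.mem_univ i₀))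
  set a : Fin m → ℤ := fun i => c i / g with ha
  have hca : ∀ i, c i = g * a i := fun i => (Int.mul_ediv_cancel' (hgdvd i)).symm
  have ha0 : ∀ i, a i = 0 ↔ c i = 0 := fun i => by
    constructor
    · intro h; rw [hca i, h, mul_zero]
    · intro h; have := hca i; rw [h] at this
      exact (mul_eq_zero.1 this.symm).resolve_left hgne
  have harel : ∀ j, ∑ i, a i * v i j = 0 := by
    intro j
    have : g * ∑ i, a i * v i j = 0 := by
      rw [Finset.mul_sum]
      rw [← hcrel j]
      exact Finset.sum_congr rfl fun i _ => by rw [hca i]; ring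
    exact (mul_eq_zero.1 this).resolve_left hgne
  have helem : (∃ i, a i ≠ 0) ∧ (∀ j, ∑ i, a i * v i j = 0) ∧
      ∀ b : Fin m → ℤ, (∀ i, a i = 0 → b i = 0) → (∀ j, ∑ i, b i * v i j = 0) →
        ∃ l : ℤ, ∀ i, b i = l * a i := by
    refine ⟨⟨i₀, fun h => hi₀ ((ha0 i₀).1 h)⟩, harel, fun b hb hbrel => ?_⟩
    have hb' : ∀ i, c i = 0 → b i = 0 := fun i hi => hb i ((ha0 i).2 hi)
    have hcb := hprop b hb' hbrel
    have hdvd : c i₀ ∣ b i₀ * g := by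
      have h1 : c i₀ ∣ Finset.gcd Finset.univ (fun i => b i₀ * c i) :=
        Finset.dvd_gcd fun i _ => ⟨b i, (hcb i).symm⟩
      rw [Finset.gcd_mul_left] at h1
      rw [← Int.abs_eq_normalize] at h1
      rcases abs_choice (b i₀) with h | h
      · rwa [h] at h1
      · rw [h] at h1; rw [← neg_neg (b i₀ * g)]
        exact Dvd.dvd.neg_right (by rwa [neg_mul] at h1)
    refine ⟨b i₀ * g / c i₀, fun i => ?_⟩
    have hl : c i₀ * (b i₀ * g / c i₀) = b i₀ * g := Int.mul_ediv_cancel' hdvd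
    have : c i₀ * b i = c i₀ * (b i₀ * g / c i₀ * a i) := by
      linear_combination hcb i + b i₀ * hca i - a i * hl
    exact mul_left_cancel₀ hi₀ this
  obtain ⟨habs, huniq⟩ := hER a helem
  -- find a coefficient of absolute value 1
  have hex1 : ∃ k, a k = 1 ∨ a k = -1 := by
    by_contra h
    push_neg at h
    have habs2 : ∀ i, a i ≠ 0 → |a i| = 2 := by
      intro i hi
      have h1 := habs i
      have h2 : a i ≠ 1 := (h i).1
      have h3 : a i ≠ -1 := (h i).2
      rcases abs_cases (a i) with ⟨he, _⟩ | ⟨he, _⟩ <;> omega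
    have hai₀ : a i₀ ≠ 0 := fun h' => hi₀ ((ha0 i₀).1 h')
    have hzero : ∀ i, i ≠ i₀ → a i = 0 := by
      intro i hne
      by_contra hi'
      exact hne (huniq i i₀ (habs2 i hi') (habs2 i₀ hai₀))
    have hvz : ∀ j, v i₀ j = 0 := by
      intro j
      have := harel j
      rw [Finset.sum_eq_single i₀ (fun i _ hne => by rw [hzero i hne]; ring)
        (fun h => absurd (Finset.mem_univ i₀) h)] at this
      exact (mul_eq_zero.1 this).resolve_left hai₀
    exact hv i₀ (funext hvz)
  obtain ⟨k, hk⟩ := hex1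
  have hk2 : a k * a k = 1 := by rcases hk with h | h <;> rw [h] <;> ring
  have hakne : a k ≠ 0 := by rcases hk with h | h <;> rw [h] <;> norm_num
  have hkJ : k ∈ J := hcJ k (fun h => hakne ((ha0 k).2 h))
  have haJ : ∀ i, i ∉ J → a i = 0 := by
    intro i hi
    by_contra h
    exact hi (hcJ i fun h' => h ((ha0 i).2 h'))
  -- v k is an integer combination of the others
  have hvk : ∀ j, v k j = ∑ i ∈ J.erase k, (-(a k) * a i) * v i j := by
    intro j
    have hJrel : ∑ i ∈ J, a i * v i j = 0 := by
      rw [Finset.sum_subset (Finset.subset_univ J)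
        (fun i _ hiJ => by rw [haJ i hiJ]; ring)]
      exact harel j
    have hsplit : ∑ i ∈ J.erase k, a i * v i j + a k * v k j = 0 := by
      rw [Finset.sum_erase_add J _ hkJ]; exact hJrel
    have : v k j = a k * (a k * v k j) := by rw [← mul_assoc, hk2, one_mul]
    rw [this]
    have h2 : a k * v k j = -∑ i ∈ J.erase k, a i * v i j := by linarith
    rw [h2, mul_neg, Finset.mul_sum, ← Finset.sum_neg_distrib]
    exact Finset.sum_congr rfl fun i _ => by ring
  obtain ⟨J', hJ'sub, hJ'ind, hJ'span⟩ := IH (J.erase k) (Finset.erase_ssubset hkJ)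
  refine ⟨J', hJ'sub.trans (Finset.erase_subset k J), hJ'ind, fun w hw => ?_⟩
  obtain ⟨cw, hcw⟩ := hw
  refine hJ'span w ⟨fun i => cw i + cw k * (-(a k) * a i), fun j => ?_⟩
  have hexp : ∑ i ∈ J.erase k, (cw i + cw k * (-(a k) * a i)) * v i j
      = ∑ i ∈ J.erase k, cw i * v i j
        + cw k * ∑ i ∈ J.erase k, (-(a k) * a i) * v i j := by
    rw [Finset.mul_sum, ← Finset.sum_add_distrib]
    exact Finset.sum_congr rfl fun i _ => by ring
  rw [hexp, ← hvk j, hcw j, ← Finset.sum_erase_add J _ hkJ]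

theorem stmt4 {m n : ℕ} (v : Fin m → Fin n → ℤ) (hv : ∀ i, v i ≠ 0)
    (hER : ∀ a : Fin m → ℤ, IsElemRel v a →
      (∀ i, |a i| ≤ 2) ∧ ∀ i i', |a i| = 2 → |a i'| = 2 → i = i') :
    ∃ J : Finset (Fin m),
      (∀ c : Fin m → ℤ, (∀ j, ∑ i ∈ J, c i * v i j = 0) → ∀ i ∈ J, c i = 0) ∧
      (∀ w : Fin n → ℤ, (∃ c : Fin m → ℤ, ∀ j, w j = ∑ i, c i * v i j) →
        ∃ c : Fin m → ℤ, ∀ j, w j = ∑ i ∈ J, c i * v i j) := by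
  obtain ⟨J, -, h1, h2⟩ := stmt4_key v hv (fun a h => hER a h) Finset.univ
  exact ⟨J, h1, fun w hw => h2 w hw⟩
end

section
/- The graph consisting of two vertex-disjoint triangles joined by a single edge (connecting one vertex of each triangle) is almost Farkas but not Farkas. -/
open Finset

/-- The vector `e_x + e_y` attached to an edge `e = {x, y}` of a simple graph. -/
def edgeVec {V : Type*} [DecidableEq V] (e : Sym2 V) : V → ℤ :=
  fun z => if z ∈ e then 1 else 0

/-- A graph is almost Farkas if its edge vectors are almost Farkas-related. -/
def GraphAFR {V : Type*} [Fintype V] [DecidableEq V] (G : SimpleGraph V)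
    [DecidableRel G.Adj] : Prop :=
  AFR (fun e : G.edgeFinset => edgeVec (e : Sym2 V))

/-- A graph is weakly Farkas if its edge vectors are weakly Farkas-related. -/
def GraphWFR {V : Type*} [Fintype V] [DecidableEq V] (G : SimpleGraph V)
    [DecidableRel G.Adj] : Prop :=
  WFR (fun e : G.edgeFinset => edgeVec (e : Sym2 V))

/-- Two vertex-disjoint triangles `{0,1,2}` and `{3,4,5}` joined by the edge `{0,3}`. -/
def twoTriangles : SimpleGraph (Fin 6) where
  Adj a b := (a, b) ∈ ([(0,1),(1,0),(1,2),(2,1),(0,2),(2,0),(3,4),(4,3),(4,5),(5,4),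
    (3,5),(5,3),(0,3),(3,0)] : List (Fin 6 × Fin 6))
  symm := by
    refine ⟨?_⟩
    show ∀ a b : Fin 6, _ → _
    decide
  loopless := by
    refine ⟨?_⟩
    show ∀ a : Fin 6, _
    decide

instance : DecidableRel twoTriangles.Adj := fun a b =>
  inferInstanceAs (Decidable (_ ∈ _))

/-- A graph is Farkas if every elementary integral relation among its edge vectors
has all coefficients in `{-1, 0, 1}`. -/
def GraphFarkas {V : Type*} [Fintype V] [DecidableEq V] (G : SimpleGraph V)
    [DecidableRel G.Adj] : Prop :=
  ∀ a : G.edgeFinset → ℤ, IsElemRel (fun e : G.edgeFinset => edgeVec (e : Sym2 V)) a →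
    ∀ i, a i = -1 ∨ a i = 0 ∨ a i = 1

/-! ### Auxiliary setup -/

abbrev EI := {e : Sym2 (Fin 6) // e ∈ twoTriangles.edgeFinset}

def E0 : EI := ⟨s(0,1), by decide⟩
def E1 : EI := ⟨s(1,2), by decide⟩
def E2 : EI := ⟨s(0,2), by decide⟩
def E3 : EI := ⟨s(3,4), by decide⟩
def E4 : EI := ⟨s(4,5), by decide⟩
def E5 : EI := ⟨s(3,5), by decide⟩
def E6 : EI := ⟨s(0,3), by decide⟩

lemma univ_eq : (univ : Finset EI) = {E0, E1, E2, E3, E4, E5, E6} := by decide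

lemma all_cases (i : EI) : i = E0 ∨ i = E1 ∨ i = E2 ∨ i = E3 ∨ i = E4 ∨ i = E5 ∨ i = E6 := by
  revert i; decide

lemma sum_expand {M : Type*} [AddCommMonoid M] (f : EI → M) :
    ∑ i, f i = f E0 + (f E1 + (f E2 + (f E3 + (f E4 + (f E5 + f E6))))) := by
  rw [univ_eq]
  rw [Finset.sum_insert (by decide), Finset.sum_insert (by decide),
    Finset.sum_insert (by decide), Finset.sum_insert (by decide),
    Finset.sum_insert (by decide), Finset.sum_insert (by decide), Finset.sum_singleton]

/-- The kernel generator `(1,-1,1,1,-1,1,-2)`. -/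
def rr : EI → ℤ := fun i =>
  if i = E0 then 1 else if i = E1 then -1 else if i = E2 then 1
  else if i = E3 then 1 else if i = E4 then -1 else if i = E5 then 1 else -2

lemma rr0 : rr E0 = 1 := by decide
lemma rr1 : rr E1 = -1 := by decide
lemma rr2 : rr E2 = 1 := by decide
lemma rr3 : rr E3 = 1 := by decide
lemma rr4 : rr E4 = -1 := by decide
lemma rr5 : rr E5 = 1 := by decide
lemma rr6 : rr E6 = -2 := by decide

lemma hrel0 : ∀ j, ∑ i : EI, rr i * edgeVec (i : Sym2 (Fin 6)) j = 0 := by decide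

-- concrete edgeVec values
lemma ev (e : EI) (j : Fin 6) : edgeVec (e : Sym2 (Fin 6)) j =
    (if j ∈ (e : Sym2 (Fin 6)) then 1 else 0) := rfl

lemma hkerQ (d : EI → ℚ) (hd : ∀ j, ∑ i : EI, d i * (edgeVec (i : Sym2 (Fin 6)) j : ℚ) = 0) :
    ∀ i, d i = d E0 * rr i := by
  have e0 := hd 0; have e1 := hd 1; have e2 := hd 2
  have e3 := hd 3; have e4 := hd 4; have e5 := hd 5
  rw [sum_expand] at e0 e1 e2 e3 e4 e5
  rw [show edgeVec ((E0 : EI) : Sym2 (Fin 6)) 0 = 1 from by decide,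
      show edgeVec ((E1 : EI) : Sym2 (Fin 6)) 0 = 0 from by decide,
      show edgeVec ((E2 : EI) : Sym2 (Fin 6)) 0 = 1 from by decide,
      show edgeVec ((E3 : EI) : Sym2 (Fin 6)) 0 = 0 from by decide,
      show edgeVec ((E4 : EI) : Sym2 (Fin 6)) 0 = 0 from by decide,
      show edgeVec ((E5 : EI) : Sym2 (Fin 6)) 0 = 0 from by decide,
      show edgeVec ((E6 : EI) : Sym2 (Fin 6)) 0 = 1 from by decide] at e0
  rw [show edgeVec ((E0 : EI) : Sym2 (Fin 6)) 1 = 1 from by decide,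
      show edgeVec ((E1 : EI) : Sym2 (Fin 6)) 1 = 1 from by decide,
      show edgeVec ((E2 : EI) : Sym2 (Fin 6)) 1 = 0 from by decide,
      show edgeVec ((E3 : EI) : Sym2 (Fin 6)) 1 = 0 from by decide,
      show edgeVec ((E4 : EI) : Sym2 (Fin 6)) 1 = 0 from by decide,
      show edgeVec ((E5 : EI) : Sym2 (Fin 6)) 1 = 0 from by decide,
      show edgeVec ((E6 : EI) : Sym2 (Fin 6)) 1 = 0 from by decide] at e1
  rw [show edgeVec ((E0 : EI) : Sym2 (Fin 6)) 2 = 0 from by decide,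
      show edgeVec ((E1 : EI) : Sym2 (Fin 6)) 2 = 1 from by decide,
      show edgeVec ((E2 : EI) : Sym2 (Fin 6)) 2 = 1 from by decide,
      show edgeVec ((E3 : EI) : Sym2 (Fin 6)) 2 = 0 from by decide,
      show edgeVec ((E4 : EI) : Sym2 (Fin 6)) 2 = 0 from by decide,
      show edgeVec ((E5 : EI) : Sym2 (Fin 6)) 2 = 0 from by decide,
      show edgeVec ((E6 : EI) : Sym2 (Fin 6)) 2 = 0 from by decide] at e2
  rw [show edgeVec ((E0 : EI) : Sym2 (Fin 6)) 3 = 0 from by decide,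
      show edgeVec ((E1 : EI) : Sym2 (Fin 6)) 3 = 0 from by decide,
      show edgeVec ((E2 : EI) : Sym2 (Fin 6)) 3 = 0 from by decide,
      show edgeVec ((E3 : EI) : Sym2 (Fin 6)) 3 = 1 from by decide,
      show edgeVec ((E4 : EI) : Sym2 (Fin 6)) 3 = 0 from by decide,
      show edgeVec ((E5 : EI) : Sym2 (Fin 6)) 3 = 1 from by decide,
      show edgeVec ((E6 : EI) : Sym2 (Fin 6)) 3 = 1 from by decide] at e3
  rw [show edgeVec ((E0 : EI) : Sym2 (Fin 6)) 4 = 0 from by decide,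
      show edgeVec ((E1 : EI) : Sym2 (Fin 6)) 4 = 0 from by decide,
      show edgeVec ((E2 : EI) : Sym2 (Fin 6)) 4 = 0 from by decide,
      show edgeVec ((E3 : EI) : Sym2 (Fin 6)) 4 = 1 from by decide,
      show edgeVec ((E4 : EI) : Sym2 (Fin 6)) 4 = 1 from by decide,
      show edgeVec ((E5 : EI) : Sym2 (Fin 6)) 4 = 0 from by decide,
      show edgeVec ((E6 : EI) : Sym2 (Fin 6)) 4 = 0 from by decide] at e4
  rw [show edgeVec ((E0 : EI) : Sym2 (Fin 6)) 5 = 0 from by decide,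
      show edgeVec ((E1 : EI) : Sym2 (Fin 6)) 5 = 0 from by decide,
      show edgeVec ((E2 : EI) : Sym2 (Fin 6)) 5 = 0 from by decide,
      show edgeVec ((E3 : EI) : Sym2 (Fin 6)) 5 = 0 from by decide,
      show edgeVec ((E4 : EI) : Sym2 (Fin 6)) 5 = 1 from by decide,
      show edgeVec ((E5 : EI) : Sym2 (Fin 6)) 5 = 1 from by decide,
      show edgeVec ((E6 : EI) : Sym2 (Fin 6)) 5 = 0 from by decide] at e5
  norm_num at e0 e1 e2 e3 e4 e5
  intro i
  rcases all_cases i with rfl|rfl|rfl|rfl|rfl|rfl|rfl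
  · rw [rr0]; push_cast; linarith
  · rw [rr1]; push_cast; linarith
  · rw [rr2]; push_cast; linarith
  · rw [rr3]; push_cast; linarith
  · rw [rr4]; push_cast; linarith
  · rw [rr5]; push_cast; linarith
  · rw [rr6]; push_cast; linarith

/-- bound lemma for coordinates with coefficient ±1 -/
lemma bnd {ai bi ci ri : ℤ} (hri : ri = 1 ∨ ri = -1) {t xi : ℚ}
    (hx : xi = (ci : ℚ) + t * (ri : ℚ)) (h1 : (ai : ℚ) ≤ xi) (h2 : xi ≤ (bi : ℚ))
    {s : ℤ} (hs1 : ⌊t⌋ ≤ s) (hs2 : s ≤ ⌈t⌉) :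
    ai ≤ ci + s * ri ∧ ci + s * ri ≤ bi := by
  rcases hri with rfl|rfl
  · have hf : (ai - ci : ℤ) ≤ ⌊t⌋ := Int.le_floor.mpr (by push_cast at hx h1 ⊢; linarith)
    have hcl : ⌈t⌉ ≤ (bi - ci : ℤ) := Int.ceil_le.mpr (by push_cast at hx h2 ⊢; linarith)
    omega
  · have hf : (ci - bi : ℤ) ≤ ⌊t⌋ := Int.le_floor.mpr (by push_cast at hx h2 ⊢; linarith)
    have hcl : ⌈t⌉ ≤ (ci - ai : ℤ) := Int.ceil_le.mpr (by push_cast at hx h1 ⊢; linarith)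
    omega

theorem stmt7 : GraphAFR twoTriangles ∧ ¬ GraphFarkas twoTriangles := by
  constructor
  · unfold GraphAFR AFR
    rintro a b hab w ⟨c, hpin, hc⟩ ⟨x, hbox, hx⟩
    -- the difference x - c lies in the kernel
    have hd : ∀ j, ∑ i : EI, (x i - (c i : ℚ)) * (edgeVec (i : Sym2 (Fin 6)) j : ℚ) = 0 := by
      intro j
      have hcQ : ((w j : ℤ) : ℚ) = ∑ i : EI, (c i : ℚ) * (edgeVec (i : Sym2 (Fin 6)) j : ℚ) := by
        exact_mod_cast congrArg (fun z : ℤ => (z : ℚ)) (hc j)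
      calc ∑ i : EI, (x i - (c i : ℚ)) * (edgeVec (i : Sym2 (Fin 6)) j : ℚ)
          = (∑ i : EI, x i * (edgeVec (i : Sym2 (Fin 6)) j : ℚ))
            - ∑ i : EI, (c i : ℚ) * (edgeVec (i : Sym2 (Fin 6)) j : ℚ) := by
            rw [← Finset.sum_sub_distrib]; exact Finset.sum_congr rfl fun i _ => by ring
        _ = 0 := by rw [← hx j, ← hcQ]; ring
    set t : ℚ := x E0 - (c E0 : ℚ) with htdef
    have hkey := hkerQ (fun i => x i - (c i : ℚ)) hd
    have hxeq : ∀ i : EI, x i = (c i : ℚ) + t * (rr i : ℚ) := by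
      intro i
      have h' := hkey i
      rw [htdef]
      linarith [h']
    -- facts at the special coordinate E6
    have hx6 : x E6 = (c E6 : ℚ) - 2 * t := by
      have := hxeq E6; rw [rr6] at this; push_cast at this; linarith
    have q1 : 2 * ⌊t⌋ ≤ c E6 - a E6 := by
      have h1 : (a E6 : ℚ) ≤ x E6 := (hbox E6).1
      have h2 : (2 * ⌊t⌋ : ℤ) ≤ ((c E6 - a E6 : ℤ) : ℚ) := by
        have := Int.floor_le t; push_cast; linarith [hx6]
      exact_mod_cast h2
    have q2 : c E6 - b E6 ≤ 2 * ⌈t⌉ := by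
      have h1 : x E6 ≤ (b E6 : ℚ) := (hbox E6).2
      have h2 : ((c E6 - b E6 : ℤ) : ℚ) ≤ (2 * ⌈t⌉ : ℤ) := by
        have := Int.le_ceil t; push_cast; linarith [hx6]
      exact_mod_cast h2
    have q3 : ⌊t⌋ ≤ ⌈t⌉ := Int.floor_le_ceil t
    have q4 : ⌈t⌉ ≤ ⌊t⌋ + 1 := Int.ceil_le_floor_add_one t
    have q5 : a E6 = b E6 → c E6 = a E6 := hpin E6
    have q6 : a E6 ≤ b E6 := hab E6
    obtain ⟨s, hs1, hs2, h6⟩ :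
        ∃ s : ℤ, ⌊t⌋ ≤ s ∧ s ≤ ⌈t⌉ ∧ (c E6 - b E6 ≤ 2 * s ∧ 2 * s ≤ c E6 - a E6) := by
      by_cases hcase : c E6 - b E6 ≤ 2 * ⌊t⌋
      · exact ⟨⌊t⌋, le_rfl, q3, hcase, q1⟩
      · refine ⟨⌈t⌉, q3, le_rfl, q2, ?_⟩
        omega
    refine ⟨fun i => c i + s * rr i, ?_, ?_⟩
    · intro i
      rcases all_cases i with rfl|rfl|rfl|rfl|rfl|rfl|rfl
      · exact bnd (Or.inl rr0) (hxeq E0) (hbox E0).1 (hbox E0).2 hs1 hs2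
      · exact bnd (Or.inr rr1) (hxeq E1) (hbox E1).1 (hbox E1).2 hs1 hs2
      · exact bnd (Or.inl rr2) (hxeq E2) (hbox E2).1 (hbox E2).2 hs1 hs2
      · exact bnd (Or.inl rr3) (hxeq E3) (hbox E3).1 (hbox E3).2 hs1 hs2
      · exact bnd (Or.inr rr4) (hxeq E4) (hbox E4).1 (hbox E4).2 hs1 hs2
      · exact bnd (Or.inl rr5) (hxeq E5) (hbox E5).1 (hbox E5).2 hs1 hs2
      · simp only [rr6]; omega
    · intro j
      have hsplit : ∑ i : EI, (c i + s * rr i) * edgeVec (i : Sym2 (Fin 6)) j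
          = (∑ i : EI, c i * edgeVec (i : Sym2 (Fin 6)) j)
            + s * ∑ i : EI, rr i * edgeVec (i : Sym2 (Fin 6)) j := by
        rw [Finset.mul_sum, ← Finset.sum_add_distrib]
        exact Finset.sum_congr rfl fun i _ => by ring
      rw [hsplit, hrel0 j, mul_zero, add_zero]
      exact hc j
  · intro h
    have helem : IsElemRel (fun e : twoTriangles.edgeFinset => edgeVec (e : Sym2 (Fin 6))) rr := by
      refine ⟨⟨E0, by decide⟩, hrel0, ?_⟩
      intro bb _ hrelb
      refine ⟨bb E0, fun i => ?_⟩
      have hd : ∀ j, ∑ i : EI, ((bb i : ℚ)) * (edgeVec (i : Sym2 (Fin 6)) j : ℚ) = 0 := by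
        intro j
        exact_mod_cast congrArg (fun z : ℤ => (z : ℚ)) (hrelb j)
      have := hkerQ (fun i => (bb i : ℚ)) hd i
      exact_mod_cast this
    have := h rr helem E6
    rw [rr6] at this
    omega
end

section
/- Let v_1,...,v_m ∈ ℤ^n. The following are equivalent: (1) the vectors are weakly Farkas-related; (2) for all integers a_1 < b_1, ..., a_m < b_m, if Σ x_i v_i = 0 for rationals with a_i ≤ x_i ≤ b_i, then Σ y_i v_i = 0 for some integers with a_i ≤ y_i ≤ b_i; (3) for all integers a_1,...,a_m, if Σ x_i v_i = 0 for rationals with a_i ≤ x_i ≤ a_i + 1, then Σ y_i v_i = 0 for some integers with a_i ≤ y_i ≤ a_i + 1. -/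
open Finset

theorem stmt8 {m n : ℕ} (v : Fin m → Fin n → ℤ) :
    (WFR v ↔
      ∀ a b : Fin m → ℤ, (∀ i, a i < b i) →
        (∃ x : Fin m → ℚ, (∀ i, (a i : ℚ) ≤ x i ∧ x i ≤ (b i : ℚ)) ∧
          ∀ j, ∑ i, x i * (v i j : ℚ) = 0) →
        ∃ y : Fin m → ℤ, (∀ i, a i ≤ y i ∧ y i ≤ b i) ∧ ∀ j, ∑ i, y i * v i j = 0) ∧
    (WFR v ↔
      ∀ a : Fin m → ℤ,
        (∃ x : Fin m → ℚ, (∀ i, (a i : ℚ) ≤ x i ∧ x i ≤ (a i : ℚ) + 1) ∧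
          ∀ j, ∑ i, x i * (v i j : ℚ) = 0) →
        ∃ y : Fin m → ℤ, (∀ i, a i ≤ y i ∧ y i ≤ a i + 1) ∧
          ∀ j, ∑ i, y i * v i j = 0) := by
  have h12 : WFR v ↔
      ∀ a b : Fin m → ℤ, (∀ i, a i < b i) →
        (∃ x : Fin m → ℚ, (∀ i, (a i : ℚ) ≤ x i ∧ x i ≤ (b i : ℚ)) ∧
          ∀ j, ∑ i, x i * (v i j : ℚ) = 0) →
        ∃ y : Fin m → ℤ, (∀ i, a i ≤ y i ∧ y i ≤ b i) ∧ ∀ j, ∑ i, y i * v i j = 0 := by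
    constructor
    · rintro hw a b hab ⟨x, hx, hx0⟩
      obtain ⟨y, hy, hy0⟩ := hw a b hab 0 ⟨0, by simp⟩
        ⟨x, hx, by intro j; simpa using (hx0 j).symm⟩
      exact ⟨y, hy, fun j => by simpa using (hy0 j).symm⟩
    · rintro h2 a b hab w ⟨c, hc⟩ ⟨x, hx, hxw⟩
      obtain ⟨y, hy, hy0⟩ := h2 (fun i => a i - c i) (fun i => b i - c i)
        (fun i => by show a i - c i < b i - c i; have := hab i; omega)
        ⟨fun i => x i - c i,
         fun i => by
          constructor
          · push_cast; linarith [(hx i).1]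
          · push_cast; linarith [(hx i).2],
         fun j => by
          have h1 := hxw j
          have h2 : (w j : ℚ) = ∑ i, (c i : ℚ) * (v i j : ℚ) := by exact_mod_cast hc j
          simp only [sub_mul, Finset.sum_sub_distrib]
          rw [← h1, ← h2]; ring⟩
      refine ⟨fun i => y i + c i, fun i =>
        ⟨by show a i ≤ y i + c i; have h : a i - c i ≤ y i := (hy i).1; omega,
         by show y i + c i ≤ b i; have h : y i ≤ b i - c i := (hy i).2; omega⟩,
        fun j => ?_⟩
      have := hy0 j
      rw [hc j]
      simp only [add_mul, Finset.sum_add_distrib]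
      omega
  have h23 : (∀ a b : Fin m → ℤ, (∀ i, a i < b i) →
        (∃ x : Fin m → ℚ, (∀ i, (a i : ℚ) ≤ x i ∧ x i ≤ (b i : ℚ)) ∧
          ∀ j, ∑ i, x i * (v i j : ℚ) = 0) →
        ∃ y : Fin m → ℤ, (∀ i, a i ≤ y i ∧ y i ≤ b i) ∧ ∀ j, ∑ i, y i * v i j = 0) ↔
      (∀ a : Fin m → ℤ,
        (∃ x : Fin m → ℚ, (∀ i, (a i : ℚ) ≤ x i ∧ x i ≤ (a i : ℚ) + 1) ∧
          ∀ j, ∑ i, x i * (v i j : ℚ) = 0) →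
        ∃ y : Fin m → ℤ, (∀ i, a i ≤ y i ∧ y i ≤ a i + 1) ∧
          ∀ j, ∑ i, y i * v i j = 0) := by
    constructor
    · rintro h2 a ⟨x, hx, hx0⟩
      obtain ⟨y, hy, hy0⟩ := h2 a (fun i => a i + 1) (fun i => lt_add_one _)
        ⟨x, fun i => ⟨(hx i).1, by push_cast; exact (hx i).2⟩, hx0⟩
      exact ⟨y, hy, hy0⟩
    · rintro h3 a b hab ⟨x, hx, hx0⟩
      set a' : Fin m → ℤ := fun i => min ⌊x i⌋ (b i - 1) with ha'
      have hx' : ∀ i, ((a' i : ℚ)) ≤ x i ∧ x i ≤ (a' i : ℚ) + 1 := by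
        intro i
        constructor
        · have h1 : ((a' i : ℤ) : ℚ) ≤ (⌊x i⌋ : ℚ) := by
            exact_mod_cast (min_le_left _ _ : a' i ≤ ⌊x i⌋)
          exact h1.trans (Int.floor_le _)
        · rcases le_or_gt (⌊x i⌋) (b i - 1) with h | h
          · have : a' i = ⌊x i⌋ := min_eq_left h
            rw [this]
            exact le_of_lt (Int.lt_floor_add_one _)
          · have hbx : (b i : ℚ) ≤ ⌊x i⌋ := by exact_mod_cast (by omega : b i ≤ ⌊x i⌋)
            have : a' i = b i - 1 := min_eq_right (by omega)
            rw [this]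
            push_cast
            linarith [(hx i).2]
      obtain ⟨y, hy, hy0⟩ := h3 a' ⟨x, hx', hx0⟩
      refine ⟨y, fun i => ?_, hy0⟩
      have h1 := (hy i).1
      have h2 := (hy i).2
      have hfl : a i ≤ ⌊x i⌋ := Int.le_floor.2 (hx i).1
      have hm : a' i = min ⌊x i⌋ (b i - 1) := rfl
      have := hab i
      omega
  exact ⟨h12, h12.trans h23⟩
end

section
/- Vectors v_1,...,v_m ∈ ℤ^n are weakly Farkas-related if and only if the following holds: for all a_1,...,a_m ∈ {-1,0,1} such that exactly one index s has a_s = 1, if there exist rationals x_i with a_i ≤ x_i ≤ a_i + 1 and Σ x_i v_i = 0, then there exist integers y_i with a_i ≤ y_i ≤ a_i + 1 and Σ y_i v_i = 0. -/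
open Finset

private def phi (A : ℤ) : ℤ := max A 0 + max (-A - 1) 0

private lemma phi_nonneg (A : ℤ) : 0 ≤ phi A := by unfold phi; omega

/-- The sign-box hypothesis. -/
private def SBH {m n : ℕ} (v : Fin m → Fin n → ℤ) : Prop :=
  ∀ a : Fin m → ℤ, (∀ i, a i = -1 ∨ a i = 0 ∨ a i = 1) → (∃! s, a s = 1) →
    (∃ x : Fin m → ℚ, (∀ i, (a i : ℚ) ≤ x i ∧ x i ≤ (a i : ℚ) + 1) ∧
      ∀ j, ∑ i, x i * (v i j : ℚ) = 0) →
    ∃ y : Fin m → ℤ, (∀ i, a i ≤ y i ∧ y i ≤ a i + 1) ∧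
      ∀ j, ∑ i, y i * v i j = 0

private lemma step_pos {m n : ℕ} {v : Fin m → Fin n → ℤ} (H : SBH v)
    (A : Fin m → ℤ) (z : Fin m → ℚ)
    (hrel : ∀ j, ∑ i, z i * (v i j : ℚ) = 0)
    (hbox : ∀ i, (A i : ℚ) ≤ z i ∧ z i ≤ (A i : ℚ) + 1)
    (s : Fin m) (hAs : 1 ≤ A s) (hmax : ∀ i, |z i| ≤ z s) :
    ∃ u : Fin m → ℤ, (∀ j, ∑ i, u i * v i j = 0) ∧
      (∀ i, phi (A i - u i) ≤ phi (A i)) ∧ phi (A s - u s) < phi (A s) := by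
  classical
  have hzs : (1 : ℚ) ≤ z s := by
    have h1 := (hbox s).1
    have : (1 : ℚ) ≤ (A s : ℚ) := by exact_mod_cast hAs
    linarith
  have hzspos : (0 : ℚ) < z s := by linarith
  set x : Fin m → ℚ := fun i => z i / z s with hx
  set a : Fin m → ℤ := fun i =>
    if i = s then 1 else if 0 < x i ∨ (x i = 0 ∧ 0 ≤ A i) then 0 else -1 with ha
  have haval : ∀ i, a i = -1 ∨ a i = 0 ∨ a i = 1 := by
    intro i; simp only [ha]; split
    · tauto
    · split <;> tauto
  have hauniq : ∃! t, a t = 1 := by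
    refine ⟨s, by simp [ha], fun t ht => ?_⟩
    by_contra hts
    simp only [ha, if_neg hts] at ht
    split at ht <;> omega
  -- the rational witness in the sign box
  have hxbox : ∀ i, ((a i : ℚ) ≤ x i ∧ x i ≤ (a i : ℚ) + 1) := by
    intro i
    by_cases his : i = s
    · subst his
      have : x i = 1 := div_self (ne_of_gt hzspos)
      simp [ha, this]
    · have hxle1 : x i ≤ 1 := by
        rw [hx, div_le_one hzspos]
        exact le_trans (le_abs_self _) (hmax i)
      have hxgem1 : -1 ≤ x i := by
        rw [hx, le_div_iff₀ hzspos]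
        have := (abs_le.mp (hmax i)).1
        linarith
      simp only [ha, if_neg his]
      split
      · next hcond =>
        norm_num
        refine ⟨?_, hxle1⟩
        rcases hcond with h | h
        · linarith
        · simp [h.1]
      · next hcond =>
        push_neg at hcond
        norm_num
        exact ⟨hxgem1, hcond.1⟩
  have hxrel : ∀ j, ∑ i, x i * (v i j : ℚ) = 0 := by
    intro j
    have : ∑ i, x i * (v i j : ℚ) = (∑ i, z i * (v i j : ℚ)) / z s := by
      rw [Finset.sum_div]
      exact Finset.sum_congr rfl fun i _ => by rw [hx]; ring
    rw [this, hrel, zero_div]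
  obtain ⟨y, hybox, hyrel⟩ := H a haval hauniq ⟨x, hxbox, hxrel⟩
  -- facts about A depending on a
  have hA0 : ∀ i, i ≠ s → a i = 0 → 0 ≤ A i := by
    intro i his hai
    by_contra hAi
    push_neg at hAi
    have hzi : z i ≤ 0 := by
      have := (hbox i).2
      have : (A i : ℚ) + 1 ≤ 0 := by
        have : (A i : ℚ) ≤ -1 := by exact_mod_cast (by omega : A i ≤ -1)
        linarith
      linarith [(hbox i).2]
    have hxi : x i ≤ 0 := div_nonpos_of_nonpos_of_nonneg hzi (le_of_lt hzspos)
    simp only [ha, if_neg his] at hai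
    split at hai
    · next hcond =>
      rcases hcond with h | h
      · linarith
      · omega
    · omega
  have hAm1 : ∀ i, i ≠ s → a i = -1 → A i ≤ -1 := by
    intro i his hai
    by_contra hAi
    push_neg at hAi
    have hzi : 0 ≤ z i := by
      have : (0 : ℚ) ≤ (A i : ℚ) := by exact_mod_cast (by omega : (0:ℤ) ≤ A i)
      linarith [(hbox i).1]
    have hxi : 0 ≤ x i := div_nonneg hzi (le_of_lt hzspos)
    simp only [ha, if_neg his] at hai
    split at hai
    · omega
    · next hcond =>
      push_neg at hcond
      have hx0 : x i = 0 := le_antisymm hcond.1 hxi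
      have := hcond.2 hx0
      omega
  refine ⟨y, hyrel, ?_, ?_⟩
  · intro i
    by_cases his : i = s
    · subst his
      have h1 := (hybox i).1
      have h2 := (hybox i).2
      simp only [ha, if_pos rfl] at h1 h2
      unfold phi; omega
    · rcases haval i with h | h | h
      · have hA := hAm1 i his h
        have h1 := (hybox i).1
        have h2 := (hybox i).2
        rw [h] at h1 h2
        unfold phi; omega
      · have hA := hA0 i his h
        have h1 := (hybox i).1
        have h2 := (hybox i).2
        rw [h] at h1 h2
        unfold phi; omega
      · exfalso
        simp only [ha, if_neg his] at h
        split at h <;> omega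
  · have h1 := (hybox s).1
    have h2 := (hybox s).2
    simp only [ha, if_pos rfl] at h1 h2
    unfold phi; omega

private lemma phi_neg (A : ℤ) : phi (-A - 1) = phi A := by unfold phi; omega

private lemma step_gen {m n : ℕ} {v : Fin m → Fin n → ℤ} (H : SBH v)
    (A : Fin m → ℤ) (z : Fin m → ℚ)
    (hrel : ∀ j, ∑ i, z i * (v i j : ℚ) = 0)
    (hbox : ∀ i, (A i : ℚ) ≤ z i ∧ z i ≤ (A i : ℚ) + 1)
    (s : Fin m) (hAs : 0 < phi (A s)) (hmax : ∀ i, |z i| ≤ |z s|) :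
    ∃ u : Fin m → ℤ, (∀ j, ∑ i, u i * v i j = 0) ∧
      (∀ i, phi (A i - u i) ≤ phi (A i)) ∧ phi (A s - u s) < phi (A s) := by
  have hcase : 1 ≤ A s ∨ A s ≤ -2 := by unfold phi at hAs; omega
  rcases hcase with hc | hc
  · have hzpos : (0:ℚ) < z s := by
      have := (hbox s).1
      have h1 : (1:ℚ) ≤ (A s : ℚ) := by exact_mod_cast hc
      linarith
    have hmax' : ∀ i, |z i| ≤ z s := fun i => by
      have := hmax i; rwa [abs_of_pos hzpos] at this
    exact step_pos H A z hrel hbox s hc hmax'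
  · have hzneg : z s < 0 := by
      have := (hbox s).2
      have h1 : (A s : ℚ) + 1 ≤ -1 := by
        have : (A s : ℚ) ≤ -2 := by exact_mod_cast hc
        linarith
      linarith
    obtain ⟨y, hyrel, hyb, hys⟩ :=
      step_pos H (fun i => -A i - 1) (fun i => -z i)
        (fun j => by
          have := hrel j
          have : ∑ i, -z i * (v i j : ℚ) = -∑ i, z i * (v i j : ℚ) := by
            rw [← Finset.sum_neg_distrib]
            exact Finset.sum_congr rfl fun i _ => by ring
          rw [this, hrel j, neg_zero])
        (fun i => by
          have h1 := (hbox i).1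
          have h2 := (hbox i).2
          push_cast
          constructor <;> linarith)
        s (by show (1:ℤ) ≤ -A s - 1; omega)
        (fun i => by
          have := hmax i
          rw [abs_of_neg hzneg] at this
          simpa [abs_neg] using this)
    refine ⟨fun i => -y i, ?_, ?_, ?_⟩
    · intro j
      have : ∑ i, -y i * v i j = -∑ i, y i * v i j := by
        rw [← Finset.sum_neg_distrib]
        exact Finset.sum_congr rfl fun i _ => by ring
      rw [this, hyrel j, neg_zero]
    · intro i
      have := hyb i
      have e1 : (-A i - 1) - y i = -(A i - -y i) - 1 := by ring
      rw [e1, phi_neg, phi_neg] at this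
      exact this
    · have e1 : (-A s - 1) - y s = -(A s - -y s) - 1 := by ring
      rw [e1, phi_neg, phi_neg] at hys
      exact hys

private lemma main_lemma {m n : ℕ} {v : Fin m → Fin n → ℤ} (H : SBH v) :
    ∀ N : ℕ, ∀ A : Fin m → ℤ, (∑ i, phi (A i)) ≤ N →
    ∀ z : Fin m → ℚ, (∀ j, ∑ i, z i * (v i j : ℚ) = 0) →
    (∀ i, (A i : ℚ) ≤ z i ∧ z i ≤ (A i : ℚ) + 1) →
    ∃ y : Fin m → ℤ, (∀ i, A i ≤ y i ∧ y i ≤ A i + 1) ∧ ∀ j, ∑ i, y i * v i j = 0 := by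
  classical
  intro N
  induction N with
  | zero =>
    intro A hsum z hrel hbox
    have hzero : ∀ i, phi (A i) = 0 := by
      intro i
      have h1 : phi (A i) ≤ ∑ i, phi (A i) :=
        Finset.single_le_sum (fun i _ => phi_nonneg (A i)) (Finset.mem_univ i)
      have := phi_nonneg (A i)
      omega
    refine ⟨fun _ => 0, fun i => ?_, fun j => by simp⟩
    show A i ≤ 0 ∧ (0:ℤ) ≤ A i + 1
    have := hzero i
    unfold phi at this
    omega
  | succ N ih =>
    intro A hsum z hrel hbox
    by_cases hall : ∀ i, phi (A i) = 0
    · refine ⟨fun _ => 0, fun i => ?_, fun j => by simp⟩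
      show A i ≤ 0 ∧ (0:ℤ) ≤ A i + 1
      have := hall i
      unfold phi at this
      omega
    · push_neg at hall
      obtain ⟨i0, hi0⟩ := hall
      have hi0' : 0 < phi (A i0) := lt_of_le_of_ne (phi_nonneg _) (Ne.symm hi0)
      -- choose s maximizing |z s| among indices with positive phi
      have hSne : (Finset.univ.filter (fun i => 0 < phi (A i))).Nonempty :=
        ⟨i0, by simp [hi0']⟩
      obtain ⟨s, hsmem, hsmax⟩ := Finset.exists_max_image _ (fun i => |z i|) hSne
      have hsphi : 0 < phi (A s) := by simpa using (Finset.mem_filter.mp hsmem).2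
      have hzs1 : (1:ℚ) ≤ |z s| := by
        have hcase : 1 ≤ A s ∨ A s ≤ -2 := by unfold phi at hsphi; omega
        rcases hcase with hc | hc
        · have h1 : (1:ℚ) ≤ (A s : ℚ) := by exact_mod_cast hc
          have := (hbox s).1
          rw [le_abs]; left; linarith
        · have h1 : (A s : ℚ) ≤ -2 := by exact_mod_cast hc
          have := (hbox s).2
          rw [le_abs]; right; linarith
      have hmax : ∀ i, |z i| ≤ |z s| := by
        intro i
        by_cases hip : 0 < phi (A i)
        · exact hsmax i (by simp [hip])
        · have hz0 : phi (A i) = 0 := by have := phi_nonneg (A i); omega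
          have hc : -1 ≤ A i ∧ A i ≤ 0 := by unfold phi at hz0; omega
          have h1 : (-1:ℚ) ≤ (A i : ℚ) := by exact_mod_cast hc.1
          have h2 : (A i : ℚ) ≤ 0 := by exact_mod_cast hc.2
          have hb1 := (hbox i).1
          have hb2 := (hbox i).2
          have : |z i| ≤ 1 := abs_le.mpr ⟨by linarith, by linarith⟩
          linarith
      obtain ⟨u, hurel, hub, hus⟩ := step_gen H A z hrel hbox s hsphi hmax
      -- new data
      have hsum' : ∑ i, phi (A i - u i) ≤ N := by
        have hlt : ∑ i, phi (A i - u i) < ∑ i, phi (A i) :=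
          Finset.sum_lt_sum (fun i _ => hub i) ⟨s, Finset.mem_univ s, hus⟩
        omega
      obtain ⟨y', hy'box, hy'rel⟩ := ih (fun i => A i - u i) hsum'
        (fun i => z i - u i)
        (fun j => by
          have h1 : ∑ i, (z i - (u i : ℚ)) * (v i j : ℚ)
              = (∑ i, z i * (v i j : ℚ)) - ∑ i, (u i : ℚ) * (v i j : ℚ) := by
            rw [← Finset.sum_sub_distrib]
            exact Finset.sum_congr rfl fun i _ => by ring
          have h2 : ∑ i, (u i : ℚ) * (v i j : ℚ) = ((∑ i, u i * v i j : ℤ) : ℚ) := by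
            push_cast; rfl
          rw [h1, hrel j, h2, hurel j]
          simp)
        (fun i => by
          have h1 := (hbox i).1
          have h2 := (hbox i).2
          push_cast
          constructor <;> linarith)
      refine ⟨fun i => y' i + u i, fun i => ?_, fun j => ?_⟩
      · show A i ≤ y' i + u i ∧ y' i + u i ≤ A i + 1
        have := hy'box i
        omega
      · have h1 : ∑ i, (y' i + u i) * v i j
            = (∑ i, y' i * v i j) + ∑ i, u i * v i j := by
          rw [← Finset.sum_add_distrib]
          exact Finset.sum_congr rfl fun i _ => by ring
        rw [h1, hy'rel j, hurel j]
        norm_num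


theorem stmt9 {m n : ℕ} (v : Fin m → Fin n → ℤ) :
    WFR v ↔
      ∀ a : Fin m → ℤ, (∀ i, a i = -1 ∨ a i = 0 ∨ a i = 1) → (∃! s, a s = 1) →
        (∃ x : Fin m → ℚ, (∀ i, (a i : ℚ) ≤ x i ∧ x i ≤ (a i : ℚ) + 1) ∧
          ∀ j, ∑ i, x i * (v i j : ℚ) = 0) →
        ∃ y : Fin m → ℤ, (∀ i, a i ≤ y i ∧ y i ≤ a i + 1) ∧
          ∀ j, ∑ i, y i * v i j = 0 := by
  constructor
  · intro hW a hval huniq hx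
    obtain ⟨x, hxbox, hxrel⟩ := hx
    obtain ⟨y, hybox, hyrel⟩ := hW a (fun i => a i + 1) (fun i => by show a i < a i + 1; omega) (fun _ => 0)
      ⟨fun _ => 0, fun j => by simp⟩
      ⟨x, fun i => by
        have := hxbox i
        push_cast
        exact this, fun j => by
        push_cast
        exact (hxrel j).symm⟩
    refine ⟨y, fun i => hybox i, fun j => ?_⟩
    have := hyrel j
    simpa using this.symm
  · intro H a b hab w hc hx
    obtain ⟨c, hcrel⟩ := hc
    obtain ⟨x, hxbox, hxrel⟩ := hx
    set z : Fin m → ℚ := fun i => x i - c i with hz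
    set A : Fin m → ℤ := fun i => min ⌊z i⌋ (b i - c i - 1) with hA
    have hcast : ∀ j, ((w j : ℤ) : ℚ) = ∑ i, (c i : ℚ) * (v i j : ℚ) := by
      intro j
      rw [hcrel j]
      push_cast
      rfl
    have hzrel : ∀ j, ∑ i, z i * (v i j : ℚ) = 0 := by
      intro j
      have h1 : ∑ i, (x i - (c i : ℚ)) * (v i j : ℚ)
          = (∑ i, x i * (v i j : ℚ)) - ∑ i, (c i : ℚ) * (v i j : ℚ) := by
        rw [← Finset.sum_sub_distrib]
        exact Finset.sum_congr rfl fun i _ => by ring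
      simp only [hz]
      rw [h1, ← hxrel j, ← hcast j]
      ring
    have hzbox : ∀ i, (A i : ℚ) ≤ z i ∧ z i ≤ (A i : ℚ) + 1 := by
      intro i
      constructor
      · calc (A i : ℚ) ≤ (⌊z i⌋ : ℚ) := by exact_mod_cast min_le_left _ _
          _ ≤ z i := Int.floor_le _
      · rcases le_total (⌊z i⌋) (b i - c i - 1) with hle | hle
        · have : A i = ⌊z i⌋ := min_eq_left hle
          rw [this]
          have := Int.lt_floor_add_one (z i)
          push_cast
          linarith
        · have hAeq : A i = b i - c i - 1 := min_eq_right hle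
          rw [hAeq]
          have h2 := (hxbox i).2
          have : z i ≤ (b i : ℚ) - (c i : ℚ) := by simp only [hz]; linarith
          push_cast
          linarith
    obtain ⟨y, hybox, hyrel⟩ := main_lemma H (∑ i, phi (A i)).toNat A
      (Int.self_le_toNat _) z hzrel hzbox
    refine ⟨fun i => c i + y i, fun i => ?_, fun j => ?_⟩
    · have hy := hybox i
      have hfl : a i - c i ≤ ⌊z i⌋ := by
        rw [Int.le_floor]
        have := (hxbox i).1
        simp only [hz]
        push_cast
        linarith
      have hA1 : a i - c i ≤ A i := le_min hfl (by have := hab i; omega)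
      have hA2 : A i + 1 ≤ b i - c i := by
        have := min_le_right (⌊z i⌋) (b i - c i - 1)
        simp only [hA] at hy ⊢
        omega
      show a i ≤ c i + y i ∧ c i + y i ≤ b i
      constructor <;> omega
    · have h1 : ∑ i, (c i + y i) * v i j = (∑ i, c i * v i j) + ∑ i, y i * v i j := by
        rw [← Finset.sum_add_distrib]
        exact Finset.sum_congr rfl fun i _ => by ring
      rw [h1, hyrel j, ← hcrel j]
      ring
end

section
/- Let v ∈ ℤ^n be a nonzero vector, let I_+ and I_- be disjoint finite index sets, and suppose w = d·v for some integer d, and k·w = a_0 v + Σ_{i∈I_+} a_i (2v) + Σ_{i∈I_-} a_i (−2v) for a natural number k ≥ 1 and integers 0 ≤ a_i ≤ k (including a_0). Then there exist l_3 ∈ {0,1} and integers 0 ≤ l_1 ≤ |I_+|, 0 ≤ l_2 ≤ |I_-| such that d = l_3 + 2l_1 − 2l_2; consequently w can be written as a {0,1}-combination of v and the vectors ±2v indexed by I_+ and I_-. -/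
open Finset

theorem stmt15 {n : ℕ} {ι : Type*} [DecidableEq ι] (v : Fin n → ℤ) (hv : v ≠ 0)
    (Ip Im : Finset ι) (hdisj : Disjoint Ip Im) (w : Fin n → ℤ) (d : ℤ)
    (hw : ∀ j, w j = d * v j) (k : ℕ) (hk : 1 ≤ k)
    (a0 : ℤ) (a : ι → ℤ) (ha0 : 0 ≤ a0 ∧ a0 ≤ (k : ℤ))
    (ha : ∀ i ∈ Ip ∪ Im, 0 ≤ a i ∧ a i ≤ (k : ℤ))
    (heq : ∀ j, (k : ℤ) * w j =
      a0 * v j + ∑ i ∈ Ip, a i * (2 * v j) + ∑ i ∈ Im, a i * (-2 * v j)) :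
    (∃ l3 l1 l2 : ℤ, (l3 = 0 ∨ l3 = 1) ∧ 0 ≤ l1 ∧ l1 ≤ (Ip.card : ℤ) ∧
      0 ≤ l2 ∧ l2 ≤ (Im.card : ℤ) ∧ d = l3 + 2 * l1 - 2 * l2) ∧
    ∃ (y0 : ℤ) (y : ι → ℤ), (y0 = 0 ∨ y0 = 1) ∧ (∀ i ∈ Ip ∪ Im, y i = 0 ∨ y i = 1) ∧
      ∀ j, w j = y0 * v j + ∑ i ∈ Ip, y i * (2 * v j) + ∑ i ∈ Im, y i * (-2 * v j) := by

  obtain ⟨j0, hj0⟩ := Function.ne_iff.mp hv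
  have hvj0 : v j0 ≠ 0 := hj0
  set A : ℤ := ∑ i ∈ Ip, a i with hA
  set B : ℤ := ∑ i ∈ Im, a i with hB
  have hc : ((k:ℤ) * d) * v j0 = (a0 + 2 * A - 2 * B) * v j0 := by
    have h := heq j0
    rw [hw j0] at h
    calc ((k:ℤ)*d)*v j0 = (k:ℤ)*(d*v j0) := by ring
    _ = a0 * v j0 + ∑ i ∈ Ip, a i * (2*v j0) + ∑ i ∈ Im, a i * (-2*v j0) := h
    _ = a0 * v j0 + A * (2*v j0) + B * (-2*v j0) := by
        rw [hA, hB, Finset.sum_mul, Finset.sum_mul]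
    _ = (a0 + 2 * A - 2 * B) * v j0 := by ring
  have hkd : (k:ℤ)*d = a0 + 2*A - 2*B := mul_right_cancel₀ hvj0 hc
  have hApos : 0 ≤ A := Finset.sum_nonneg fun i hi => (ha i (Finset.mem_union_left _ hi)).1
  have hBpos : 0 ≤ B := Finset.sum_nonneg fun i hi => (ha i (Finset.mem_union_right _ hi)).1
  have hAle : A ≤ (Ip.card : ℤ) * k := by
    calc A ≤ ∑ _i ∈ Ip, (k:ℤ) := Finset.sum_le_sum fun i hi => (ha i (Finset.mem_union_left _ hi)).2
    _ = (Ip.card : ℤ) * k := by rw [Finset.sum_const, nsmul_eq_mul]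
  have hBle : B ≤ (Im.card : ℤ) * k := by
    calc B ≤ ∑ _i ∈ Im, (k:ℤ) := Finset.sum_le_sum fun i hi => (ha i (Finset.mem_union_right _ hi)).2
    _ = (Im.card : ℤ) * k := by rw [Finset.sum_const, nsmul_eq_mul]
  have hkpos : (0:ℤ) < k := by exact_mod_cast hk
  have hdub : d ≤ 1 + 2 * (Ip.card : ℤ) := by
    have h1 : (k:ℤ) * d ≤ (k:ℤ) * (1 + 2 * (Ip.card : ℤ)) := by nlinarith [ha0.2]
    exact le_of_mul_le_mul_left h1 hkpos
  have hdlb : -(2 * (Im.card : ℤ)) ≤ d := by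
    have h1 : (k:ℤ) * (-(2 * (Im.card : ℤ))) ≤ (k:ℤ) * d := by nlinarith [ha0.1]
    exact le_of_mul_le_mul_left h1 hkpos
  have key : ∃ l3 l1 l2 : ℤ, (l3 = 0 ∨ l3 = 1) ∧ 0 ≤ l1 ∧ l1 ≤ (Ip.card : ℤ) ∧
      0 ≤ l2 ∧ l2 ≤ (Im.card : ℤ) ∧ d = l3 + 2 * l1 - 2 * l2 := by
    rcases le_or_gt 0 d with h | h
    · exact ⟨d % 2, (d - d % 2) / 2, 0, by omega, by omega, by omega, by omega, by omega, by omega⟩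
    · exact ⟨d % 2, 0, (d % 2 - d) / 2, by omega, by omega, by omega, by omega, by omega, by omega⟩
  refine ⟨key, ?_⟩
  obtain ⟨l3, l1, l2, hl3, hl1, hl1', hl2, hl2', hd⟩ := key
  obtain ⟨S, hS, hScard⟩ := Finset.exists_subset_card_eq (s := Ip) (n := l1.toNat) (by omega)
  obtain ⟨T, hT, hTcard⟩ := Finset.exists_subset_card_eq (s := Im) (n := l2.toNat) (by omega)
  set y : ι → ℤ := fun i => if i ∈ S ∪ T then 1 else 0 with hy
  have hsumS : ∑ i ∈ Ip, y i = l1 := by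
    have h1 : ∀ i ∈ Ip, y i = if i ∈ S then 1 else 0 := by
      intro i hi
      simp only [hy, Finset.mem_union]
      have : i ∉ T := fun hiT => (Finset.disjoint_left.mp hdisj hi) (hT hiT)
      by_cases hiS : i ∈ S <;> simp [hiS, this]
    rw [Finset.sum_congr rfl h1, Finset.sum_ite_mem,
      Finset.inter_eq_right.mpr hS, Finset.sum_const, nsmul_eq_mul, hScard]
    omega
  have hsumT : ∑ i ∈ Im, y i = l2 := by
    have h1 : ∀ i ∈ Im, y i = if i ∈ T then 1 else 0 := by
      intro i hi
      simp only [hy, Finset.mem_union]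
      have : i ∉ S := fun hiS => (Finset.disjoint_right.mp hdisj hi) (hS hiS)
      by_cases hiT : i ∈ T <;> simp [hiT, this]
    rw [Finset.sum_congr rfl h1, Finset.sum_ite_mem,
      Finset.inter_eq_right.mpr hT, Finset.sum_const, nsmul_eq_mul, hTcard]
    omega
  refine ⟨l3, y, hl3, ?_, ?_⟩
  · intro i _
    simp only [hy]
    by_cases h : i ∈ S ∪ T <;> simp [h]
  · intro j
    have h1 : ∑ i ∈ Ip, y i * (2 * v j) = l1 * (2 * v j) := by
      rw [← Finset.sum_mul, hsumS]
    have h2 : ∑ i ∈ Im, y i * (-2 * v j) = l2 * (-2 * v j) := by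
      rw [← Finset.sum_mul, hsumT]
    rw [hw j, h1, h2, hd]
    ring
end

section
/- Let v_1,...,v_r, v_{r+1},...,v_m ∈ ℤ^n where v_1,...,v_r form a ℤ-basis of Σ_{i=1}^m ℤ v_i, and suppose v_1 ∈ Σ_{j=2}^m ℤ v_j. Define p: Σ_{i=1}^m ℤ v_i → Σ_{i=2}^r ℤ v_i as the unique ℤ-linear map with u − p(u) ∈ ℤ v_1 for all u. If every elementary integral relation among v_1,...,v_m has coefficients of absolute value ≤ 2 with at most one coefficient of absolute value 2, then the same property holds for every elementary integral relation among p(v_2),...,p(v_m). -/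
open Finset

theorem stmt16 {m n r : ℕ} (hm : 0 < m) (hr : 0 < r) (hrm : r ≤ m)
    (v : Fin m → Fin n → ℤ)
    (hindep : ∀ c : Fin r → ℤ,
      (∀ j, ∑ i : Fin r, c i * v (Fin.castLE hrm i) j = 0) → ∀ i, c i = 0)
    (hgen : ∀ i : Fin m, ∃ c : Fin r → ℤ,
      ∀ j, v i j = ∑ i' : Fin r, c i' * v (Fin.castLE hrm i') j)
    (hv1 : ∃ c : Fin m → ℤ, c ⟨0, hm⟩ = 0 ∧
      ∀ j, v ⟨0, hm⟩ j = ∑ i, c i * v i j)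
    (pv : Fin m → Fin n → ℤ)
    (hp : ∀ i, (∃ d : ℤ, ∀ j, v i j - pv i j = d * v ⟨0, hm⟩ j) ∧
      ∃ c : Fin r → ℤ, c ⟨0, hr⟩ = 0 ∧
        ∀ j, pv i j = ∑ i' : Fin r, c i' * v (Fin.castLE hrm i') j)
    (hER : ∀ a : Fin m → ℤ, IsElemRel v a →
      (∀ i, |a i| ≤ 2) ∧ ∀ i i', |a i| = 2 → |a i'| = 2 → i = i') :
    ∀ a : {i : Fin m // i ≠ ⟨0, hm⟩} → ℤ,
      IsElemRel (fun i : {i : Fin m // i ≠ ⟨0, hm⟩} => pv i.1) a →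
      (∀ i, |a i| ≤ 2) ∧ ∀ i i', |a i| = 2 → |a i'| = 2 → i = i' := by
  classical
  set i0 : Fin m := ⟨0, hm⟩ with hi0def
  choose d hd using fun i => (hp i).1
  choose cc hcc0 hcc using fun i => (hp i).2
  intro a ha
  obtain ⟨⟨i1, hi1⟩, hrel0, hmin⟩ := ha
  have hrel : ∀ j, ∑ i : {i : Fin m // i ≠ i0}, a i * pv i.1 j = 0 := by
    simpa using hrel0
  have hsplit : ∀ f : Fin m → ℤ, ∑ i, f i = f i0 + ∑ i : {i : Fin m // i ≠ i0}, f i.1 := by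
    intro f
    rw [Fintype.sum_eq_add_sum_compl i0]
    congr 1
    exact Finset.sum_subtype (p := fun i => i ≠ i0) ({i0}ᶜ) (fun x => by simp) f
  have hpv : ∀ i j, pv i j = v i j - d i * v i0 j := fun i j => by
    have := hd i j; linarith
  -- if a combination of the basis vectors with zero first coefficient equals lam * v i0
  -- then lam = 0
  have hzero : ∀ (c : Fin r → ℤ) (lam : ℤ), c ⟨0, hr⟩ = 0 →
      (∀ j, ∑ k : Fin r, c k * v (Fin.castLE hrm k) j = lam * v i0 j) → lam = 0 := by
    intro c lam hc0 hc
    have h := hindep (fun k => c k - if k = ⟨0, hr⟩ then lam else 0) ?_ ⟨0, hr⟩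
    · simp only [if_pos rfl, hc0, zero_sub, neg_eq_zero] at h
      exact h
    · intro j
      have hone : ∑ k : Fin r, (if k = (⟨0, hr⟩ : Fin r) then lam else 0) * v (Fin.castLE hrm k) j
          = lam * v i0 j := by
        rw [Finset.sum_eq_single (⟨0, hr⟩ : Fin r)]
        · simp only [if_pos rfl]
          rfl
        · intro b _ hb; simp [hb]
        · simp
      simp_rw [sub_mul]
      rw [Finset.sum_sub_distrib, hone, hc j, sub_self]
  -- projection lemma: any integral relation on v restricts to one on pv
  have proj : ∀ b : Fin m → ℤ, (∀ j, ∑ i, b i * v i j = 0) →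
      (∀ j, ∑ i : {i : Fin m // i ≠ i0}, b i.1 * pv i.1 j = 0) ∧
      b i0 = -(∑ i : {i : Fin m // i ≠ i0}, b i.1 * d i.1) := by
    intro b hb
    have hBpv : ∀ j, ∑ i : {i : Fin m // i ≠ i0}, b i.1 * pv i.1 j
        = (-(b i0) - ∑ i : {i : Fin m // i ≠ i0}, b i.1 * d i.1) * v i0 j := by
      intro j
      have h1 := hb j
      rw [hsplit (fun i => b i * v i j)] at h1
      simp_rw [hpv, mul_sub, ← mul_assoc]
      rw [Finset.sum_sub_distrib, ← Finset.sum_mul]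
      linarith [h1]
    have hc : ∀ j, ∑ k : Fin r, (∑ i : {i : Fin m // i ≠ i0}, b i.1 * cc i.1 k)
          * v (Fin.castLE hrm k) j
        = ∑ i : {i : Fin m // i ≠ i0}, b i.1 * pv i.1 j := by
      intro j
      simp_rw [hcc, Finset.mul_sum, Finset.sum_mul]
      rw [Finset.sum_comm]
      simp_rw [mul_assoc]
    have hlam := hzero _ _ (by simp [hcc0]) (fun j => (hc j).trans (hBpv j))
    have hb0 : b i0 = -(∑ i : {i : Fin m // i ≠ i0}, b i.1 * d i.1) := by linarith
    refine ⟨fun j => ?_, hb0⟩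
    rw [hBpv j]
    have hz : -(b i0) - ∑ i : {i : Fin m // i ≠ i0}, b i.1 * d i.1 = 0 := by
      rw [hb0]; ring
    rw [hz, zero_mul]
  -- the extended coefficient vector
  set A : Fin m → ℤ := fun i =>
    if h : i = i0 then -(∑ k : {i : Fin m // i ≠ i0}, a k * d k.1) else a ⟨i, h⟩ with hAdef
  have hAe : ∀ i : {i : Fin m // i ≠ i0}, A i.1 = a i := fun i => by
    simp only [hAdef, dif_neg i.2]
  have hA0 : A i0 = -(∑ k : {i : Fin m // i ≠ i0}, a k * d k.1) := by
    simp only [hAdef, dif_pos rfl]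
  have hArel : ∀ j, ∑ i, A i * v i j = 0 := by
    intro j
    rw [hsplit (fun i => A i * v i j)]
    have hterm : ∀ i : {i : Fin m // i ≠ i0},
        A i.1 * v i.1 j = a i * pv i.1 j + (a i * d i.1) * v i0 j := fun i => by
      rw [hAe, hpv]; ring
    simp only [hterm]
    rw [Finset.sum_add_distrib, hrel j, ← Finset.sum_mul, hA0]
    ring
  have hAelem : IsElemRel v A := by
    refine ⟨⟨i1.1, by rw [hAe]; exact hi1⟩, hArel, ?_⟩
    intro b hbs hb
    obtain ⟨hbpv, hbi0⟩ := proj b hb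
    obtain ⟨l, hl⟩ := hmin (fun i => b i.1)
      (fun i hai => hbs i.1 (by rw [hAe]; exact hai)) hbpv
    refine ⟨l, fun i => ?_⟩
    by_cases h : i = i0
    · subst h
      rw [hbi0, hA0]
      have hs : ∑ i : {i : Fin m // i ≠ i0}, b i.1 * d i.1
          = l * ∑ i : {i : Fin m // i ≠ i0}, a i * d i.1 := by
        rw [Finset.mul_sum]
        exact Finset.sum_congr rfl fun i _ => by rw [hl i]; ring
      rw [hs]; ring
    · rw [show A i = a ⟨i, h⟩ from hAe ⟨i, h⟩]
      exact hl ⟨i, h⟩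
  obtain ⟨h2, h2u⟩ := hER A hAelem
  refine ⟨fun i => ?_, fun i i' h h' => ?_⟩
  · have := h2 i.1; rwa [hAe] at this
  · exact Subtype.ext (h2u i.1 i'.1 (by rw [hAe]; exact h) (by rw [hAe]; exact h'))
end
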